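/- arXiv:2207.13124 — 7 statements merged into one kernel-verified Lean document; each statement's English description precedes it below -/
import Mathlib

section
/- Let P be a nonempty compact convex body in R^3 and (h_1,h_2,h_3) a Minkowski reduced basis of Z^3 with respect to P. Then ls_Delta(P) >= w_{h_3}(P). -/
open scoped BigOperators

/-- Width of a set `P ⊆ ℝ^d` in direction `h`. -/
noncomputable def width {d : ℕ} (P : Set (Fin d → ℝ)) (h : Fin d → ℝ) : ℝ :=
  sSup ((fun x => ∑ i, h i * x i) '' P) - sInf ((fun x => ∑ i, h i * x i) '' P)

/-- Cast an integer vector to a real vector. -/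
def zcast {d : ℕ} (h : Fin d → ℤ) : Fin d → ℝ := fun i => (h i : ℝ)

/-- A lattice polytope: the convex hull of a nonempty finite set of integer points. -/
def IsLatticePolytope {d : ℕ} (P : Set (Fin d → ℝ)) : Prop :=
  ∃ V : Finset (Fin d → ℝ), V.Nonempty ∧ (∀ v ∈ V, ∀ i, ∃ n : ℤ, v i = (n : ℝ)) ∧
    P = convexHull ℝ (V : Set (Fin d → ℝ))

/-- `l₁` of a subset of `ℝ³`. -/
noncomputable def lone3 (P : Set (Fin 3 → ℝ)) : ℝ :=
  sSup ((fun x => x 0 + x 1 + x 2) '' P) - sInf ((fun x => x 0) '' P) -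
    sInf ((fun x => x 1) '' P) - sInf ((fun x => x 2) '' P)

/-- `l₁` of a subset of `ℝ²`. -/
noncomputable def lone2 (P : Set (Fin 2 → ℝ)) : ℝ :=
  sSup ((fun x => x 0 + x 1) '' P) - sInf ((fun x => x 0) '' P) - sInf ((fun x => x 1) '' P)

/-- Lattice size of a subset of `ℝ³` with respect to the standard simplex. -/
noncomputable def lsDelta3 (P : Set (Fin 3 → ℝ)) : ℝ :=
  sInf {r : ℝ | ∃ A : Matrix (Fin 3) (Fin 3) ℤ, IsUnit A.det ∧ ∃ v : Fin 3 → ℤ,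
    r = lone3 ((fun x => Matrix.mulVec (A.map (Int.cast : ℤ → ℝ)) x + zcast v) '' P)}

/-- Lattice size of a subset of `ℝ²` with respect to the standard simplex. -/
noncomputable def lsDelta2 (P : Set (Fin 2 → ℝ)) : ℝ :=
  sInf {r : ℝ | ∃ A : Matrix (Fin 2) (Fin 2) ℤ, IsUnit A.det ∧ ∃ v : Fin 2 → ℤ,
    r = lone2 ((fun x => Matrix.mulVec (A.map (Int.cast : ℤ → ℝ)) x + zcast v) '' P)}

/-! Every `A ∈ GL(3, ℤ)` has a row `g = A i` outside the span of `h₁, h₂`, since otherwise `A`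
factors through a matrix with a zero column. Minkowski reducedness then gives
`w_{h₃}(P) ≤ w_g(P)`, and `w_g(P)` is the extent of `T(P)` along the `i`-th coordinate, which is
at most `l₁(T(P))`. -/

theorem Real.sSup_sub_sInf_le {s : Set ℝ} (hs : s.Nonempty) {L : ℝ}
    (H : ∀ a ∈ s, ∀ b ∈ s, a - b ≤ L) : sSup s - sInf s ≤ L := by
  have : sSup s - L ≤ sInf s :=
    le_csInf hs fun b hb => sub_le_iff_le_add.2 <| csSup_le hs fun a ha => by
      linarith [H a ha b hb]
  linarith

theorem Matrix.det_eq_zero_of_forall_row_eq_smul_add_smul {R : Type*} [CommRing R]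
    {A : Matrix (Fin 3) (Fin 3) R} {u w : Fin 3 → R}
    (hA : ∀ i, ∃ m n : R, A i = m • u + n • w) : A.det = 0 := by
  choose m n hmn using hA
  have hAeq : A = Matrix.of (fun i => ![m i, n i, 0]) * Matrix.of ![u, w, 0] := by
    ext i j
    simp [Matrix.mul_apply, Fin.sum_univ_three, hmn]
  rw [hAeq, Matrix.det_mul, Matrix.det_eq_zero_of_column_eq_zero 2 (by simp), zero_mul]

theorem coord_sub_le_lone3 {Q : Set (Fin 3 → ℝ)} (hQ : IsCompact Q) {p q : Fin 3 → ℝ}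
    (hp : p ∈ Q) (hq : q ∈ Q) (i : Fin 3) : p i - q i ≤ lone3 Q := by
  have hsum : p 0 + p 1 + p 2 ≤ sSup ((fun x : Fin 3 → ℝ => x 0 + x 1 + x 2) '' Q) :=
    le_csSup (hQ.bddAbove_image (by fun_prop)) ⟨p, hp, rfl⟩
  have hinf : ∀ j, ∀ x ∈ Q, sInf ((fun y : Fin 3 → ℝ => y j) '' Q) ≤ x j := fun j x hx =>
    csInf_le (hQ.bddBelow_image (continuous_apply j).continuousOn) ⟨x, hx, rfl⟩
  rw [lone3]
  fin_cases i <;> simp only [Fin.zero_eta, Fin.mk_one, Fin.reduceFinMk] <;>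
    linarith [hinf 0 p hp, hinf 1 p hp, hinf 2 p hp, hinf 0 q hq, hinf 1 q hq, hinf 2 q hq]

theorem width_row_le_lone3 {P : Set (Fin 3 → ℝ)} (hne : P.Nonempty) (hc : IsCompact P)
    (A : Matrix (Fin 3) (Fin 3) ℤ) (v : Fin 3 → ℤ) (i : Fin 3) :
    width P (zcast (A i)) ≤
      lone3 ((fun x => Matrix.mulVec (A.map (Int.cast : ℤ → ℝ)) x + zcast v) '' P) := by
  set T := fun x => Matrix.mulVec (A.map (Int.cast : ℤ → ℝ)) x + zcast v
  have hT : Continuous T := by fun_prop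
  have hcoord : ∀ x, T x i = ∑ j, zcast (A i) j * x j + v i := fun x => by
    simp [T, Matrix.mulVec, dotProduct, zcast]
  refine Real.sSup_sub_sInf_le (hne.image _) ?_
  rintro _ ⟨p, hp, rfl⟩ _ ⟨q, hq, rfl⟩
  have := coord_sub_le_lone3 (hc.image hT) (Set.mem_image_of_mem T hp)
    (Set.mem_image_of_mem T hq) i
  rw [hcoord, hcoord] at this
  linarith

theorem lsDelta3_ge_minkowski_reduced_general (P : Set (Fin 3 → ℝ)) (hne : P.Nonempty)
    (hc : IsCompact P) (h1 h2 h3 : Fin 3 → ℤ)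
    (c3 : ∀ h : Fin 3 → ℤ, (¬ ∃ m n : ℤ, h = m • h1 + n • h2) →
      width P (zcast h3) ≤ width P (zcast h)) :
    width P (zcast h3) ≤ lsDelta3 P := by
  refine le_csInf ⟨_, 1, by simp, 0, rfl⟩ ?_
  rintro r ⟨A, hA, v, rfl⟩
  obtain ⟨i, hi⟩ : ∃ i, ¬ ∃ m n : ℤ, A i = m • h1 + n • h2 := by
    by_contra! h
    exact hA.ne_zero (Matrix.det_eq_zero_of_forall_row_eq_smul_add_smul h)
  exact (c3 _ hi).trans (width_row_le_lone3 hne hc A v i)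

theorem lsDelta3_ge_minkowski_reduced (P : Set (Fin 3 → ℝ)) (hne : P.Nonempty)
    (hc : IsCompact P) (hconv : Convex ℝ P) (h1 h2 h3 : Fin 3 → ℤ)
    (hbasis : IsUnit (Matrix.of ![h1, h2, h3]).det)
    (c1 : ∀ h : Fin 3 → ℤ, h ≠ 0 → width P (zcast h1) ≤ width P (zcast h))
    (c2 : ∀ h : Fin 3 → ℤ, (¬ ∃ k : ℤ, h = k • h1) → width P (zcast h2) ≤ width P (zcast h))
    (c3 : ∀ h : Fin 3 → ℤ, (¬ ∃ m n : ℤ, h = m • h1 + n • h2) →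
      width P (zcast h3) ≤ width P (zcast h)) :
    width P (zcast h3) ≤ lsDelta3 P :=
  lsDelta3_ge_minkowski_reduced_general P hne hc h1 h2 h3 c3
end

section
/- Let Pi in R^2 be a lattice parallelogram of area 1 (i.e. Pi = v + {s u_1 + t u_2 : 0 <= s,t <= 1} where u_1, u_2 in Z^2 have determinant +-1 and v in Z^2). Then there is a lattice translate of Pi having a vertex at the origin such that the translate is contained in the closed first quadrant {x >= 0, y >= 0} or in the closed second quadrant {x <= 0, y >= 0}. -/
open scoped BigOperators

/-!
Replacing an edge vector `u` by `-u` gives the same parallelogram based at a neighbouring vertex,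
so it suffices to find signs `ε, δ = ±1` for which `ε • u₁` and `δ • u₂` lie in a common closed
quadrant of the upper half-plane: the parallelogram they span at the origin then lies in that
quadrant. Flip signs so that both second coordinates are nonnegative. If the first coordinates
then have strictly opposite signs, the two terms of the determinant have the same sign, so
`|det| = 1` forces one of the vectors to be horizontal, and flipping that one repairs the sign.
-/

open Set

section Parallelogram

variable {G : Type*}

def parallelogramVertices [AddCommMonoid G] (x a b : G) : Set G := {x, x + a, x + b, x + a + b}

lemma parallelogramVertices_comm [AddCommMonoid G] (x a b : G) :
    parallelogramVertices x a b = parallelogramVertices x b a := by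
  simp only [parallelogramVertices, add_right_comm x a b]
  rw [insert_comm (x + a)]

lemma parallelogramVertices_neg_left [AddCommGroup G] (x a b : G) :
    parallelogramVertices x (-a) b = parallelogramVertices (x - a) a b := by
  simp only [parallelogramVertices, sub_add_cancel, ← sub_eq_add_neg, sub_add_eq_add_sub]
  rw [insert_comm x, pair_comm]

lemma exists_parallelogramVertices_units_smul_left [AddCommGroup G] (x a b : G) (ε : ℤˣ) :
    ∃ y, parallelogramVertices x (ε • a) b = parallelogramVertices y a b := by
  rcases Int.units_eq_one_or ε with rfl | rfl
  · exact ⟨x, by rw [one_smul]⟩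
  · exact ⟨x - a, by rw [Units.neg_smul, one_smul, parallelogramVertices_neg_left]⟩

lemma exists_parallelogramVertices_eq_units_smul [AddCommGroup G] (a b : G) (ε δ : ℤˣ) :
    ∃ x, parallelogramVertices x a b = parallelogramVertices 0 (ε • a) (δ • b) := by
  obtain ⟨y, hy⟩ := exists_parallelogramVertices_units_smul_left 0 b (ε • a) δ
  obtain ⟨x, hx⟩ := exists_parallelogramVertices_units_smul_left y a b ε
  refine ⟨x, ?_⟩
  rw [← hx, parallelogramVertices_comm, ← hy, parallelogramVertices_comm]

lemma image_parallelogramVertices [AddCommMonoid G] {H : Type*} [AddCommMonoid H] (f : G →+ H)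
    (x a b : G) :
    f '' parallelogramVertices x a b = parallelogramVertices (f x) (f a) (f b) := by
  simp only [parallelogramVertices, image_insert_eq, image_singleton, map_add]

lemma convexHull_parallelogramVertices_subset {𝕜 E : Type*} [Semiring 𝕜] [PartialOrder 𝕜]
    [IsOrderedRing 𝕜] [AddCommMonoid E] [Module 𝕜 E] (C : PointedCone 𝕜 E) {a b : E}
    (ha : a ∈ C) (hb : b ∈ C) : convexHull 𝕜 (parallelogramVertices 0 a b) ⊆ C := by
  refine C.convex.convexHull_subset_iff.2 ?_
  simp only [parallelogramVertices, zero_add]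
  rintro _ (rfl | rfl | rfl | rfl)
  exacts [C.zero_mem, ha, hb, C.add_mem ha hb]

end Parallelogram

def firstQuadrant : PointedCone ℝ (Fin 2 → ℝ) where
  carrier := {p | 0 ≤ p 0 ∧ 0 ≤ p 1}
  zero_mem' := by simp
  add_mem' hp hq := ⟨add_nonneg hp.1 hq.1, add_nonneg hp.2 hq.2⟩
  smul_mem' c _ hp := ⟨mul_nonneg c.2 hp.1, mul_nonneg c.2 hp.2⟩

def secondQuadrant : PointedCone ℝ (Fin 2 → ℝ) where
  carrier := {p | p 0 ≤ 0 ∧ 0 ≤ p 1}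
  zero_mem' := by simp
  add_mem' hp hq := ⟨add_nonpos hp.1 hq.1, add_nonneg hp.2 hq.2⟩
  smul_mem' c _ hp := ⟨mul_nonpos_of_nonneg_of_nonpos c.2 hp.1, mul_nonneg c.2 hp.2⟩

lemma coe_compLeft_castAddHom {d : ℕ} : ⇑((Int.castAddHom ℝ).compLeft (Fin d)) = zcast := rfl

lemma convexHull_parallelogramVertices_subset_quadrant {a b : Fin 2 → ℤ} (ha : 0 ≤ a 1)
    (hb : 0 ≤ b 1) (hab : 0 ≤ a 0 * b 0) :
    convexHull ℝ (zcast '' parallelogramVertices 0 a b) ⊆ firstQuadrant ∨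
      convexHull ℝ (zcast '' parallelogramVertices 0 a b) ⊆ secondQuadrant := by
  rw [← coe_compLeft_castAddHom, image_parallelogramVertices, map_zero, coe_compLeft_castAddHom]
  have ha' : (0 : ℝ) ≤ a 1 := Int.cast_nonneg ha
  have hb' : (0 : ℝ) ≤ b 1 := Int.cast_nonneg hb
  rcases mul_nonneg_iff.mp hab with ⟨ha₀, hb₀⟩ | ⟨ha₀, hb₀⟩
  · exact .inl <| convexHull_parallelogramVertices_subset _
      ⟨Int.cast_nonneg ha₀, ha'⟩ ⟨Int.cast_nonneg hb₀, hb'⟩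
  · exact .inr <| convexHull_parallelogramVertices_subset _
      ⟨Int.cast_nonpos.2 ha₀, ha'⟩ ⟨Int.cast_nonpos.2 hb₀, hb'⟩

lemma exists_units_mul_nonneg (n : ℤ) : ∃ ε : ℤˣ, 0 ≤ ε * n := by
  rcases le_total 0 n with h | h
  · exact ⟨1, by simpa using h⟩
  · exact ⟨-1, by simpa using h⟩

lemma eq_zero_or_eq_zero_of_isUnit_det_of_mul_neg {a₀ a₁ b₀ b₁ : ℤ}
    (hdet : IsUnit (a₀ * b₁ - a₁ * b₀)) (ha : 0 ≤ a₁) (hb : 0 ≤ b₁) (hab : a₀ * b₀ < 0) :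
    a₁ = 0 ∨ b₁ = 0 := by
  by_contra! h
  have ha₁ : 1 ≤ a₁ := by omega
  have hb₁ : 1 ≤ b₁ := by omega
  rcases Int.isUnit_iff.mp hdet with hd | hd <;>
    rcases mul_neg_iff.mp hab with ⟨h₀, h₁⟩ | ⟨h₀, h₁⟩ <;> nlinarith

lemma exists_units_smul_quadrant_of_nonneg {a b : Fin 2 → ℤ}
    (hdet : IsUnit (a 0 * b 1 - a 1 * b 0)) (ha : 0 ≤ a 1) (hb : 0 ≤ b 1) :
    ∃ ε δ : ℤˣ, 0 ≤ (ε • a) 1 ∧ 0 ≤ (δ • b) 1 ∧ 0 ≤ (ε • a) 0 * (δ • b) 0 := by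
  simp only [Units.smul_def, Pi.smul_apply, smul_eq_mul]
  rcases le_or_gt 0 (a 0 * b 0) with hab | hab
  · exact ⟨1, 1, by simpa using ⟨ha, hb, hab⟩⟩
  rcases eq_zero_or_eq_zero_of_isUnit_det_of_mul_neg hdet ha hb hab with h | h
  · exact ⟨-1, 1, by simp [h], by simpa using hb, by simpa using hab.le⟩
  · exact ⟨1, -1, by simpa using ha, by simp [h], by simpa using hab.le⟩

lemma exists_units_smul_quadrant {a b : Fin 2 → ℤ} (hdet : IsUnit (a 0 * b 1 - a 1 * b 0)) :
    ∃ ε δ : ℤˣ, 0 ≤ (ε • a) 1 ∧ 0 ≤ (δ • b) 1 ∧ 0 ≤ (ε • a) 0 * (δ • b) 0 := by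
  obtain ⟨ε₀, hε₀⟩ := exists_units_mul_nonneg (a 1)
  obtain ⟨δ₀, hδ₀⟩ := exists_units_mul_nonneg (b 1)
  have hdet₀ : IsUnit ((ε₀ • a) 0 * (δ₀ • b) 1 - (ε₀ • a) 1 * (δ₀ • b) 0) := by
    have : (ε₀ • a) 0 * (δ₀ • b) 1 - (ε₀ • a) 1 * (δ₀ • b) 0 =
        ((ε₀ * δ₀ : ℤˣ) : ℤ) * (a 0 * b 1 - a 1 * b 0) := by
      simp only [Units.smul_def, Pi.smul_apply, smul_eq_mul, Units.val_mul]
      ring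
    rw [this]
    exact (ε₀ * δ₀).isUnit.mul hdet
  obtain ⟨ε, δ, h⟩ := exists_units_smul_quadrant_of_nonneg hdet₀ hε₀ hδ₀
  exact ⟨ε * ε₀, δ * δ₀, by simpa only [mul_smul] using h⟩

theorem parallelogram_translate_quadrant (u1 u2 v : Fin 2 → ℤ)
    (hdet : u1 0 * u2 1 - u1 1 * u2 0 = 1 ∨ u1 0 * u2 1 - u1 1 * u2 0 = -1) :
    ∃ t : Fin 2 → ℤ,
      ((v + t = 0 ∨ v + t + u1 = 0 ∨ v + t + u2 = 0 ∨ v + t + u1 + u2 = 0) ∧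
       ((∀ p ∈ convexHull ℝ ({zcast (v + t), zcast (v + t + u1), zcast (v + t + u2),
            zcast (v + t + u1 + u2)} : Set (Fin 2 → ℝ)), 0 ≤ p 0 ∧ 0 ≤ p 1) ∨
        (∀ p ∈ convexHull ℝ ({zcast (v + t), zcast (v + t + u1), zcast (v + t + u2),
            zcast (v + t + u1 + u2)} : Set (Fin 2 → ℝ)), p 0 ≤ 0 ∧ 0 ≤ p 1))) := by
  obtain ⟨ε, δ, ha, hb, hab⟩ := exists_units_smul_quadrant (Int.isUnit_iff.2 hdet)
  obtain ⟨x, hx⟩ := exists_parallelogramVertices_eq_units_smul u1 u2 ε δ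
  obtain ⟨t, rfl⟩ : ∃ t, x = v + t := ⟨x - v, (add_sub_cancel v x).symm⟩
  have hzero : (0 : Fin 2 → ℤ) ∈ parallelogramVertices (v + t) u1 u2 := hx ▸ mem_insert 0 _
  have hquad := hx ▸ convexHull_parallelogramVertices_subset_quadrant ha hb hab
  simp only [parallelogramVertices, image_insert_eq, image_singleton] at hquad
  exact ⟨t, by
    simpa only [parallelogramVertices, mem_insert_iff, mem_singleton_iff, eq_comm] using hzero, hquad⟩
end

section
/- Let P be a lattice polygon in R^2 and A a nonsingular 2x2 integer matrix. Then l_1(AP) >= ls_Delta(P). -/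
open scoped BigOperators

lemma hnf2 (B : Matrix (Fin 2) (Fin 2) ℤ) (hB : B.det ≠ 0) :
    ∃ (V : Matrix (Fin 2) (Fin 2) ℤ) (a c β : ℤ), IsUnit V.det ∧
      V * B = !![a, β; 0, c] ∧ 1 ≤ a ∧ 1 ≤ c ∧ 1 - c ≤ β ∧ β ≤ 0 ∧ a * c = |B.det| := by
  set p := B 0 0 with hp
  set q := B 0 1 with hq
  set r := B 1 0 with hr
  set s := B 1 1 with hs
  have hdet : B.det = p * s - q * r := by
    rw [Matrix.det_fin_two]
  have hpr : p ≠ 0 ∨ r ≠ 0 := by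
    by_contra h
    push_neg at h
    apply hB
    rw [hdet, h.1, h.2]; ring
  set g : ℤ := (Int.gcd p r : ℤ) with hgdef
  have hgnat : 0 < Int.gcd p r := Int.gcd_pos_iff.mpr hpr
  have hg : 0 < g := by rw [hgdef]; exact_mod_cast hgnat
  obtain ⟨p', hp'⟩ : g ∣ p := Int.gcd_dvd_left p r
  obtain ⟨r', hr'⟩ : g ∣ r := Int.gcd_dvd_right p r
  set u := Int.gcdA p r with hu
  set v := Int.gcdB p r with hv
  have hbez : g = p * u + r * v := Int.gcd_eq_gcd_ab p r
  set V1 : Matrix (Fin 2) (Fin 2) ℤ := !![u, v; -r', p'] with hV1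
  have hdV1 : V1.det = 1 := by
    have h1 : g * (u * p' - v * -r') = g * 1 := by
      have : g * (u * p' - v * -r') = (g * p') * u + (g * r') * v := by ring
      rw [this, ← hp', ← hr', mul_one, ← hbez]
    have := mul_left_cancel₀ (ne_of_gt hg) h1
    rw [hV1, Matrix.det_fin_two_of, this]
  have hV1B : V1 * B = !![g, u*q + v*s; 0, -r'*q + p'*s] := by
    have hBeta : B = !![p, q; r, s] := Matrix.eta_fin_two B
    rw [hV1]
    conv_lhs => rw [hBeta]
    rw [Matrix.mul_fin_two]
    have e1 : u * p + v * r = g := by rw [hbez]; ring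
    have e2 : -r' * p + p' * r = 0 := by rw [hp', hr']; ring
    rw [e1, e2]
  set b1 := u*q + v*s with hb1
  set c1 := -r'*q + p'*s with hc1def
  have hgc1 : g * c1 = B.det := by
    have : g * c1 = (g * p') * s - q * (g * r') := by rw [hc1def]; ring
    rw [this, ← hp', ← hr', ← hdet]
  have hc1 : c1 ≠ 0 := by
    intro h
    apply hB
    rw [← hgc1, h, mul_zero]
  obtain ⟨V2, c, hcpos, hV2det, hV2B, hgc⟩ :
      ∃ (V2 : Matrix (Fin 2) (Fin 2) ℤ) (c : ℤ), 0 < c ∧ IsUnit V2.det ∧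
        V2 * B = !![g, b1; 0, c] ∧ g * c = |B.det| := by
    rcases hc1.lt_or_gt with hneg | hpos
    · refine ⟨!![1,0;0,-1] * V1, -c1, by linarith, ?_, ?_, ?_⟩
      · rw [Matrix.det_mul, hdV1, Matrix.det_fin_two_of]
        norm_num
      · rw [Matrix.mul_assoc, hV1B, Matrix.mul_fin_two]
        norm_num
      · rw [← hgc1, abs_mul, abs_of_pos hg, abs_of_neg hneg]
    · refine ⟨V1, c1, hpos, by rw [hdV1]; exact isUnit_one, hV1B, ?_⟩
      rw [← hgc1, abs_mul, abs_of_pos hg, abs_of_pos hpos]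
  set k := (-b1) / c with hk
  set β := b1 + c * k with hβdef
  have hβ : β = -((-b1) % c) := by
    rw [hβdef, Int.emod_def]; ring
  have hβ0 : β ≤ 0 := by
    rw [hβ, neg_nonpos]
    exact Int.emod_nonneg (-b1) (ne_of_gt hcpos)
  have hβ1 : 1 - c ≤ β := by
    have := Int.emod_lt_of_pos (-b1) hcpos
    rw [hβ]; omega
  refine ⟨!![1,k;0,1] * V2, g, c, β, ?_, ?_, by omega, by omega, hβ1, hβ0, hgc⟩
  · rw [Matrix.det_mul, Matrix.det_fin_two_of]
    simpa using hV2det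
  · rw [Matrix.mul_assoc, hV2B, Matrix.mul_fin_two, hβdef]
    norm_num
    ring_nf

lemma abs_lin_le {m0 m1 x0 x1 w R : ℝ} (h0 : |x0| ≤ R) (h1 : |x1| ≤ R) :
    |m0 * x0 + m1 * x1 + w| ≤ (|m0| + |m1|) * R + |w| := by
  have a0 : |m0 * x0| ≤ |m0| * R := by
    rw [abs_mul]; exact mul_le_mul_of_nonneg_left h0 (abs_nonneg _)
  have a1 : |m1 * x1| ≤ |m1| * R := by
    rw [abs_mul]; exact mul_le_mul_of_nonneg_left h1 (abs_nonneg _)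
  calc |m0 * x0 + m1 * x1 + w| ≤ |m0 * x0 + m1 * x1| + |w| := abs_add_le _ _
    _ ≤ |m0 * x0| + |m1 * x1| + |w| := by linarith [abs_add_le (m0*x0) (m1*x1)]
    _ ≤ (|m0| + |m1|) * R + |w| := by linarith

lemma mulVec_apply0 (M : Matrix (Fin 2) (Fin 2) ℝ) (x : Fin 2 → ℝ) :
    M.mulVec x 0 = M 0 0 * x 0 + M 0 1 * x 1 := by
  simp [Matrix.mulVec, dotProduct, Fin.sum_univ_two]

lemma mulVec_apply1 (M : Matrix (Fin 2) (Fin 2) ℝ) (x : Fin 2 → ℝ) :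
    M.mulVec x 1 = M 1 0 * x 0 + M 1 1 * x 1 := by
  simp [Matrix.mulVec, dotProduct, Fin.sum_univ_two]

noncomputable def boundC (M : Matrix (Fin 2) (Fin 2) ℝ) (w : Fin 2 → ℝ) (R : ℝ) : ℝ :=
  (|M 0 0| + |M 0 1| + |M 1 0| + |M 1 1|) * R + |w 0| + |w 1|

lemma mulVec_bound (M : Matrix (Fin 2) (Fin 2) ℝ) (w : Fin 2 → ℝ) (R : ℝ) (hR : 0 ≤ R)
    (p : Fin 2 → ℝ) (h0 : |p 0| ≤ R) (h1 : |p 1| ≤ R) :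
    |(M.mulVec p + w) 0| ≤ boundC M w R ∧ |(M.mulVec p + w) 1| ≤ boundC M w R := by
  have e0 : (M.mulVec p + w) 0 = M 0 0 * p 0 + M 0 1 * p 1 + w 0 := by
    simp [mulVec_apply0]
  have e1 : (M.mulVec p + w) 1 = M 1 0 * p 0 + M 1 1 * p 1 + w 1 := by
    simp [mulVec_apply1]
  have b0 := abs_lin_le (m0 := M 0 0) (m1 := M 0 1) (w := w 0) h0 h1
  have b1 := abs_lin_le (m0 := M 1 0) (m1 := M 1 1) (w := w 1) h0 h1
  have n0 : 0 ≤ |M 0 0| * R := mul_nonneg (abs_nonneg _) hR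
  have n1 : 0 ≤ |M 0 1| * R := mul_nonneg (abs_nonneg _) hR
  have n2 : 0 ≤ |M 1 0| * R := mul_nonneg (abs_nonneg _) hR
  have n3 : 0 ≤ |M 1 1| * R := mul_nonneg (abs_nonneg _) hR
  have aw0 : 0 ≤ |w 0| := abs_nonneg _
  have aw1 : 0 ≤ |w 1| := abs_nonneg _
  constructor
  · rw [e0]; unfold boundC; nlinarith [b0]
  · rw [e1]; unfold boundC; nlinarith [b1]

lemma lone2_nonneg (Q : Set (Fin 2 → ℝ)) (hne : Q.Nonempty)
    (hbdd : ∃ C, ∀ q ∈ Q, |q 0| ≤ C ∧ |q 1| ≤ C) : 0 ≤ lone2 Q := by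
  obtain ⟨q, hq⟩ := hne
  obtain ⟨C, hC⟩ := hbdd
  have hbA : BddAbove ((fun x => x 0 + x 1) '' Q) := by
    refine ⟨C + C, ?_⟩
    rintro _ ⟨y, hy, rfl⟩
    have h := hC y hy
    have := (abs_le.mp h.1).2
    have := (abs_le.mp h.2).2
    simpa using by linarith
  have hb0 : BddBelow ((fun x => x 0) '' Q) := by
    refine ⟨-C, ?_⟩
    rintro _ ⟨y, hy, rfl⟩
    exact (abs_le.mp (hC y hy).1).1
  have hb1 : BddBelow ((fun x => x 1) '' Q) := by
    refine ⟨-C, ?_⟩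
    rintro _ ⟨y, hy, rfl⟩
    exact (abs_le.mp (hC y hy).2).1
  have h1 : q 0 + q 1 ≤ sSup ((fun x => x 0 + x 1) '' Q) :=
    le_csSup hbA ⟨q, hq, rfl⟩
  have h2 : sInf ((fun x => x 0) '' Q) ≤ q 0 := csInf_le hb0 ⟨q, hq, rfl⟩
  have h3 : sInf ((fun x => x 1) '' Q) ≤ q 1 := csInf_le hb1 ⟨q, hq, rfl⟩
  unfold lone2
  linarith

lemma lone2_le (Q : Set (Fin 2 → ℝ)) (hne : Q.Nonempty) (t0 t1 l : ℝ)
    (h : ∀ q ∈ Q, t0 ≤ q 0 ∧ t1 ≤ q 1 ∧ q 0 + q 1 ≤ t0 + t1 + l) : lone2 Q ≤ l := by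
  have h1 : sSup ((fun x => x 0 + x 1) '' Q) ≤ t0 + t1 + l := by
    apply csSup_le (hne.image _)
    rintro _ ⟨y, hy, rfl⟩
    exact (h y hy).2.2
  have h2 : t0 ≤ sInf ((fun x => x 0) '' Q) := by
    apply le_csInf (hne.image _)
    rintro _ ⟨y, hy, rfl⟩
    exact (h y hy).1
  have h3 : t1 ≤ sInf ((fun x => x 1) '' Q) := by
    apply le_csInf (hne.image _)
    rintro _ ⟨y, hy, rfl⟩
    exact (h y hy).2.1
  unfold lone2
  linarith

lemma crunch (a c β l t0 t1 z0 z1 q0 q1 : ℝ)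
    (ha : 1 ≤ a) (hc : 1 ≤ c) (hβ1 : 1 - c ≤ β) (hβ0 : β ≤ 0) (hl0 : 0 ≤ l)
    (hq0 : (a*c) * q0 = a * z0 + β * z1) (hq1 : (a*c) * q1 = c * z1)
    (hz0 : t0 ≤ z0) (hz1 : t1 ≤ z1) (hz01 : z0 + z1 ≤ t0 + t1 + l) :
    (a*t0 + β*t1 + l*β)/(a*c) ≤ q0 ∧ (c*t1)/(a*c) ≤ q1 ∧
      q0 + q1 ≤ (a*t0 + β*t1 + l*β)/(a*c) + (c*t1)/(a*c) + l := by
  have hdpos : (0:ℝ) < a * c := by nlinarith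
  have hz1u : z1 ≤ t1 + l := by linarith
  refine ⟨?_, ?_, ?_⟩
  · rw [div_le_iff₀ hdpos]
    have h1 : a * t0 ≤ a * z0 := mul_le_mul_of_nonneg_left hz0 (by linarith)
    have h2 : β * (t1 + l) ≤ β * z1 := mul_le_mul_of_nonpos_left hz1u hβ0
    nlinarith [hq0, h1, h2]
  · rw [div_le_iff₀ hdpos]
    have h1 : c * t1 ≤ c * z1 := mul_le_mul_of_nonneg_left hz1 (by linarith)
    nlinarith [hq1, h1]
  · have key : (a*c) * (q0 + q1) ≤ (a*t0 + β*t1 + l*β) + c*t1 + (a*c)*l := by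
      have expand : (a*c) * (q0 + q1) = a * z0 + β * z1 + c * z1 := by
        rw [mul_add, hq0, hq1]
      rw [expand]
      rcases le_or_gt a (β + c) with hcase | hcase
      · have h1 : 0 ≤ (β + c - a) * (z0 - t0) := mul_nonneg (by linarith) (by linarith)
        have h2 : (β + c) * ((z0 - t0) + (z1 - t1)) ≤ (β + c) * l :=
          mul_le_mul_of_nonneg_left (by linarith) (by linarith)
        have h3 : 0 ≤ (a * c - c) * l := mul_nonneg (by nlinarith) hl0
        nlinarith [h1, h2, h3]
      · have h1 : 0 ≤ (a - (β + c)) * (z1 - t1) := mul_nonneg (by linarith) (by linarith)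
        have h2 : a * ((z0 - t0) + (z1 - t1)) ≤ a * l :=
          mul_le_mul_of_nonneg_left (by linarith) (by linarith)
        have h3 : 0 ≤ (β + a * c - a) * l := by
          have hfac : 0 ≤ (a - 1) * (c - 1) := mul_nonneg (by linarith) (by linarith)
          exact mul_nonneg (by nlinarith [hfac]) hl0
        nlinarith [h1, h2, h3]
    have hsum : (a*t0 + β*t1 + l*β)/(a*c) + (c*t1)/(a*c) + l =
        ((a*t0 + β*t1 + l*β) + c*t1 + (a*c)*l) / (a*c) := by
      field_simp
    rw [hsum, le_div_iff₀ hdpos]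
    nlinarith [key]

lemma poly_bounded (Vfin : Finset (Fin 2 → ℝ)) (hVne : Vfin.Nonempty) :
    ∃ R : ℝ, 0 ≤ R ∧ ∀ p ∈ convexHull ℝ (Vfin : Set (Fin 2 → ℝ)), |p 0| ≤ R ∧ |p 1| ≤ R := by
  classical
  set f : (Fin 2 → ℝ) → ℝ := fun w => max |w 0| |w 1| with hf
  refine ⟨Vfin.sup' hVne f, ?_, ?_⟩
  · obtain ⟨w0, hw0⟩ := id hVne
    have h1 : f w0 ≤ Vfin.sup' hVne f := Finset.le_sup' f hw0
    have h2 : (0:ℝ) ≤ f w0 := le_trans (abs_nonneg _) (le_max_left _ _)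
    linarith
  · have hsub : (Vfin : Set (Fin 2 → ℝ)) ⊆
        {x | |x 0| ≤ Vfin.sup' hVne f ∧ |x 1| ≤ Vfin.sup' hVne f} := by
      intro w hw
      have h1 : f w ≤ Vfin.sup' hVne f := Finset.le_sup' f hw
      have h2 : |w 0| ≤ f w := le_max_left _ _
      have h3 : |w 1| ≤ f w := le_max_right _ _
      exact ⟨by linarith, by linarith⟩
    have hcnv : Convex ℝ {x : Fin 2 → ℝ | |x 0| ≤ Vfin.sup' hVne f ∧ |x 1| ≤ Vfin.sup' hVne f} := by
      intro x hx y hy a b ha hb hab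
      have e0 : (a • x + b • y) 0 = a * x 0 + b * y 0 := by simp
      have e1 : (a • x + b • y) 1 = a * x 1 + b * y 1 := by simp
      constructor
      · rw [e0]
        calc |a * x 0 + b * y 0| ≤ |a * x 0| + |b * y 0| := abs_add_le _ _
          _ = a * |x 0| + b * |y 0| := by
              rw [abs_mul, abs_mul, abs_of_nonneg ha, abs_of_nonneg hb]
          _ ≤ a * Vfin.sup' hVne f + b * Vfin.sup' hVne f :=
              add_le_add (mul_le_mul_of_nonneg_left hx.1 ha) (mul_le_mul_of_nonneg_left hy.1 hb)
          _ = Vfin.sup' hVne f := by rw [← add_mul, hab, one_mul]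
      · rw [e1]
        calc |a * x 1 + b * y 1| ≤ |a * x 1| + |b * y 1| := abs_add_le _ _
          _ = a * |x 1| + b * |y 1| := by
              rw [abs_mul, abs_mul, abs_of_nonneg ha, abs_of_nonneg hb]
          _ ≤ a * Vfin.sup' hVne f + b * Vfin.sup' hVne f :=
              add_le_add (mul_le_mul_of_nonneg_left hx.2 ha) (mul_le_mul_of_nonneg_left hy.2 hb)
          _ = Vfin.sup' hVne f := by rw [← add_mul, hab, one_mul]
    intro p hp
    exact convexHull_min hsub hcnv hp

theorem lone2_nonsingular_ge_lsDelta2 (P : Set (Fin 2 → ℝ)) (hP : IsLatticePolytope P)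
    (A : Matrix (Fin 2) (Fin 2) ℤ) (hA : A.det ≠ 0) :
    lsDelta2 P ≤ lone2 ((fun x => Matrix.mulVec (A.map (Int.cast : ℤ → ℝ)) x) '' P) := by
  obtain ⟨Vfin, hVne, _hVint, hPdef⟩ := hP
  obtain ⟨v0, hv0⟩ := id hVne
  have hv0P : v0 ∈ P := hPdef ▸ subset_convexHull ℝ _ hv0
  have hPne : P.Nonempty := ⟨v0, hv0P⟩
  obtain ⟨R, hR0, hRb⟩ := poly_bounded Vfin hVne
  have hR : ∀ p ∈ P, |p 0| ≤ R ∧ |p 1| ≤ R := fun p hp => hRb p (hPdef ▸ hp)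
  set Areal := A.map (Int.cast : ℤ → ℝ) with hAreal
  set AP := (fun x => Areal.mulVec x) '' P with hAPdef
  have hAPne : AP.Nonempty := hPne.image _
  have hAPbdd : ∀ q ∈ AP, |q 0| ≤ boundC Areal 0 R ∧ |q 1| ≤ boundC Areal 0 R := by
    rintro _ ⟨pp, hpp, rfl⟩
    have h := mulVec_bound Areal 0 R hR0 pp (hR pp hpp).1 (hR pp hpp).2
    simpa using h
  have hl0 : 0 ≤ lone2 AP := lone2_nonneg AP hAPne ⟨_, hAPbdd⟩
  set l := lone2 AP with hldef
  set t0 := sInf ((fun x => x 0) '' AP) with ht0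
  set t1 := sInf ((fun x => x 1) '' AP) with ht1
  have hsupEq : sSup ((fun x => x 0 + x 1) '' AP) = l + t0 + t1 := by
    rw [hldef]
    unfold lone2
    rw [← ht0, ← ht1]
    ring
  have hz : ∀ pp ∈ P, t0 ≤ Areal.mulVec pp 0 ∧ t1 ≤ Areal.mulVec pp 1 ∧
      Areal.mulVec pp 0 + Areal.mulVec pp 1 ≤ t0 + t1 + l := by
    intro pp hpp
    have hmem : Areal.mulVec pp ∈ AP := ⟨pp, hpp, rfl⟩
    have hb0 : BddBelow ((fun x => x 0) '' AP) := by
      refine ⟨-(boundC Areal 0 R), ?_⟩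
      rintro _ ⟨y, hy, rfl⟩
      exact (abs_le.mp (hAPbdd y hy).1).1
    have hb1 : BddBelow ((fun x => x 1) '' AP) := by
      refine ⟨-(boundC Areal 0 R), ?_⟩
      rintro _ ⟨y, hy, rfl⟩
      exact (abs_le.mp (hAPbdd y hy).2).1
    have hbA : BddAbove ((fun x => x 0 + x 1) '' AP) := by
      refine ⟨boundC Areal 0 R + boundC Areal 0 R, ?_⟩
      rintro _ ⟨y, hy, rfl⟩
      have h := hAPbdd y hy
      have h1 := (abs_le.mp h.1).2
      have h2 := (abs_le.mp h.2).2
      show y 0 + y 1 ≤ _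
      linarith
    refine ⟨csInf_le hb0 ⟨_, hmem, rfl⟩, csInf_le hb1 ⟨_, hmem, rfl⟩, ?_⟩
    have hle := le_csSup hbA (⟨_, hmem, rfl⟩ : _ ∈ (fun x => x 0 + x 1) '' AP)
    rw [hsupEq] at hle
    have hle2 : Areal.mulVec pp 0 + Areal.mulVec pp 1 ≤ l + t0 + t1 := hle
    linarith
  -- integer matrix B with B * A = |det A| • 1
  set ε : ℤ := if 0 ≤ A.det then 1 else -1 with hε
  set B := ε • A.adjugate with hB
  have hεdet : ε * A.det = |A.det| := by
    by_cases h : 0 ≤ A.det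
    · rw [hε, if_pos h, abs_of_nonneg h, one_mul]
    · rw [hε, if_neg h, abs_of_neg (lt_of_not_ge h)]; ring
  have hBA : B * A = |A.det| • (1 : Matrix (Fin 2) (Fin 2) ℤ) := by
    rw [hB, Matrix.smul_mul, Matrix.adjugate_mul, smul_smul, hεdet]
  have hBdetA : B.det = A.det := by
    rw [hB, Matrix.det_smul, Matrix.det_adjugate]
    have hcard : Fintype.card (Fin 2) = 2 := by simp
    rw [hcard]
    have hε2 : ε ^ 2 = 1 := by
      by_cases h : 0 ≤ A.det <;> simp [hε, h]
    rw [hε2, one_mul, pow_one]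
  have hBdet : B.det ≠ 0 := by rw [hBdetA]; exact hA
  obtain ⟨V, a, c, β, hVu, hVB, ha, hc, hβint1, hβint0, hac⟩ := hnf2 B hBdet
  have hacA : (a * c : ℤ) = |A.det| := by rw [hac, hBdetA]
  have hTA : (!![a, β; 0, c]) * A = (a * c) • V := by
    rw [← hVB, Matrix.mul_assoc, hBA, Matrix.mul_smul, Matrix.mul_one, hacA]
  set Vreal := V.map (Int.cast : ℤ → ℝ) with hVreal
  set Treal := (!![a, β; 0, c]).map (Int.cast : ℤ → ℝ) with hTreal
  have hmapmul : ∀ (M N : Matrix (Fin 2) (Fin 2) ℤ),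
      (M * N).map (Int.cast : ℤ → ℝ) = M.map (Int.cast : ℤ → ℝ) * N.map (Int.cast : ℤ → ℝ) := by
    intro M N
    have h := Matrix.map_mul (L := M) (M := N) (f := Int.castRingHom ℝ)
    simpa [Int.coe_castRingHom] using h
  have hTAreal : Treal * Areal = ((a : ℝ) * (c : ℝ)) • Vreal := by
    rw [hTreal, hAreal, ← hmapmul, hTA]
    ext i j
    simp only [hVreal, Matrix.map_apply, Matrix.smul_apply, smul_eq_mul]
    push_cast
    ring
  have haR : (1 : ℝ) ≤ (a : ℝ) := by exact_mod_cast ha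
  have hcR : (1 : ℝ) ≤ (c : ℝ) := by exact_mod_cast hc
  have hβ0R : (β : ℝ) ≤ 0 := by exact_mod_cast hβint0
  have hβ1R : 1 - (c : ℝ) ≤ (β : ℝ) := by exact_mod_cast hβint1
  have hqid : ∀ pp : Fin 2 → ℝ,
      Treal.mulVec (Areal.mulVec pp) = ((a : ℝ) * (c : ℝ)) • Vreal.mulVec pp := by
    intro pp
    rw [Matrix.mulVec_mulVec, hTAreal, Matrix.smul_mulVec]
  have hTe0 : ∀ z : Fin 2 → ℝ, Treal.mulVec z 0 = (a : ℝ) * z 0 + (β : ℝ) * z 1 := by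
    intro z
    rw [mulVec_apply0]
    have e1 : Treal 0 0 = (a : ℝ) := by rw [hTreal]; simp [Matrix.map_apply]
    have e2 : Treal 0 1 = (β : ℝ) := by rw [hTreal]; simp [Matrix.map_apply]
    rw [e1, e2]
  have hTe1 : ∀ z : Fin 2 → ℝ, Treal.mulVec z 1 = (c : ℝ) * z 1 := by
    intro z
    rw [mulVec_apply1]
    have e1 : Treal 1 0 = (0 : ℝ) := by rw [hTreal]; simp [Matrix.map_apply]
    have e2 : Treal 1 1 = (c : ℝ) := by rw [hTreal]; simp [Matrix.map_apply]
    rw [e1, e2]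
    ring
  -- the main estimate
  have hQle : lone2 ((fun x => Vreal.mulVec x) '' P) ≤ l := by
    apply lone2_le _ (hPne.image _)
      (((a : ℝ)*t0 + (β : ℝ)*t1 + l*(β : ℝ))/((a : ℝ)*(c : ℝ)))
      (((c : ℝ)*t1)/((a : ℝ)*(c : ℝ))) l
    rintro _ ⟨pp, hpp, rfl⟩
    obtain ⟨hz0, hz1, hz01⟩ := hz pp hpp
    have hqp := hqid pp
    have hq0 : ((a : ℝ) * (c : ℝ)) * Vreal.mulVec pp 0 =
        (a : ℝ) * Areal.mulVec pp 0 + (β : ℝ) * Areal.mulVec pp 1 := by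
      have h := congrFun hqp 0
      rw [hTe0] at h
      simpa [smul_eq_mul] using h.symm
    have hq1 : ((a : ℝ) * (c : ℝ)) * Vreal.mulVec pp 1 = (c : ℝ) * Areal.mulVec pp 1 := by
      have h := congrFun hqp 1
      rw [hTe1] at h
      simpa [smul_eq_mul] using h.symm
    exact crunch (a : ℝ) (c : ℝ) (β : ℝ) l t0 t1 (Areal.mulVec pp 0) (Areal.mulVec pp 1)
      (Vreal.mulVec pp 0) (Vreal.mulVec pp 1) haR hcR hβ1R hβ0R hl0
      hq0 hq1 hz0 hz1 hz01
  -- membership and conclusion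
  have hmem : lone2 ((fun x => Vreal.mulVec x) '' P) ∈
      {r : ℝ | ∃ A' : Matrix (Fin 2) (Fin 2) ℤ, IsUnit A'.det ∧ ∃ v : Fin 2 → ℤ,
        r = lone2 ((fun x => Matrix.mulVec (A'.map (Int.cast : ℤ → ℝ)) x + zcast v) '' P)} := by
    refine ⟨V, hVu, 0, ?_⟩
    have hzero : zcast (0 : Fin 2 → ℤ) = (0 : Fin 2 → ℝ) := by
      funext i; simp [zcast]
    have hfun : (fun x : Fin 2 → ℝ => Matrix.mulVec (V.map (Int.cast : ℤ → ℝ)) x + zcast 0)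
        = fun x => Vreal.mulVec x := by
      funext x
      rw [hzero, add_zero, hVreal]
    rw [hfun]
  have hSbdd : BddBelow {r : ℝ | ∃ A' : Matrix (Fin 2) (Fin 2) ℤ, IsUnit A'.det ∧ ∃ v : Fin 2 → ℤ,
      r = lone2 ((fun x => Matrix.mulVec (A'.map (Int.cast : ℤ → ℝ)) x + zcast v) '' P)} := by
    refine ⟨0, ?_⟩
    rintro r ⟨A', _hA', v', rfl⟩
    apply lone2_nonneg _ (hPne.image _)
    refine ⟨boundC (A'.map (Int.cast : ℤ → ℝ)) (zcast v') R, ?_⟩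
    rintro _ ⟨pp, hpp, rfl⟩
    exact mulVec_bound _ _ R hR0 pp (hR pp hpp).1 (hR pp hpp).2
  show lsDelta2 P ≤ l
  unfold lsDelta2
  exact csInf_le_of_le hSbdd hmem hQle
end

section
/- Let P be a lattice polygon contained in the plane z = 0 of R^3, and let l be its lattice size with respect to the standard 2-simplex computed inside that plane. Then the lattice size of P with respect to the standard 3-simplex, considering P as a subset of R^3, also equals l. -/
open scoped BigOperators

def WitW (b00 b01 b10 b11 b20 b21 : ℤ) : Prop :=
  ∃ u0 u1 v0 v1 a0 a1 a2 r0 r1 r2 N g : ℤ,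
    (u0 * v1 - u1 * v0 = 1 ∨ u0 * v1 - u1 * v0 = -1) ∧ 1 ≤ N ∧ 1 ≤ g ∧
    0 ≤ a0 ∧ 0 ≤ a1 ∧ 0 ≤ a2 ∧ 0 ≤ r0 ∧ 0 ≤ r1 ∧ 0 ≤ r2 ∧
    a0 * g + r0 * N ≤ N * g ∧ a1 * g + r1 * N ≤ N * g ∧ a2 * g + r2 * N ≤ N * g ∧
    N * u0 = a0 * b00 + a1 * b10 + a2 * b20 ∧
    N * u1 = a0 * b01 + a1 * b11 + a2 * b21 ∧
    g * v0 = r0 * b00 + r1 * b10 + r2 * b20 ∧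
    g * v1 = r0 * b01 + r1 * b11 + r2 * b21

lemma lmb_ordered (e0 e1 N u v : ℤ) (h1 : 0 ≤ e1) (h10 : e1 ≤ e0) (hN : e0 ≤ N)
    (hbez : u * e0 + v * e1 = 1) :
    ∃ q0 q1 : ℤ, 0 ≤ q0 ∧ q0 ≤ N ∧ 0 ≤ q1 ∧ q1 ≤ N ∧ e0 * q1 - e1 * q0 = N := by
  rcases eq_or_lt_of_le h1 with h1' | h1'
  · have h0e : 0 ≤ e0 := h1' ▸ h10
    have he : e0 = 1 := by
      have hd : e0 ∣ 1 := ⟨u, by rw [← hbez, ← h1']; ring⟩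
      exact Int.eq_one_of_dvd_one h0e hd
    subst he
    exact ⟨0, N, le_refl _, by linarith, by linarith, le_refl _, by rw [← h1']; ring⟩
  · have he0 : (0:ℤ) < e0 := lt_of_lt_of_le h1' h10
    have hNpos : (0:ℤ) < N := lt_of_lt_of_le he0 hN
    have hl0 : 0 ≤ ((e0 - 1) * N * v) % e0 := Int.emod_nonneg _ (ne_of_gt he0)
    have hl1 : ((e0 - 1) * N * v) % e0 < e0 := Int.emod_lt_of_pos _ he0
    have hldef : ((e0 - 1) * N * v) % e0
        = (e0 - 1) * N * v - e0 * (((e0 - 1) * N * v) / e0) := Int.emod_def _ _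
    have hdvd : e0 ∣ (e0 - 1) * N - (((e0 - 1) * N * v) % e0) * e1 := by
      refine ⟨(e0 - 1) * N * u + (((e0 - 1) * N * v) / e0) * e1, ?_⟩
      rw [hldef]
      linear_combination (-(e0 - 1) * N) * hbez
    obtain ⟨k, hke⟩ := hdvd
    have hk0 : 0 ≤ k := by
      have h2 : (((e0 - 1) * N * v) % e0) * e1 ≤ (e0 - 1) * N := by
        have : (((e0 - 1) * N * v) % e0) * e1 ≤ (e0 - 1) * e1 := by nlinarith
        nlinarith
      nlinarith
    have hkN : k ≤ N := by
      have hek : e0 * k ≤ (e0 - 1) * N := by nlinarith [mul_nonneg hl0 h1]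
      by_contra hc
      push_neg at hc
      have h3 : e0 * (N + 1) ≤ e0 * k := mul_le_mul_of_nonneg_left (by omega) (le_of_lt he0)
      nlinarith
    exact ⟨((e0 - 1) * N * v) % e0, N - k, hl0, by linarith, by linarith, by linarith,
      by linear_combination hke⟩

/-- LMB, symmetric version: result sign can be ±. -/
lemma lmb_sym (e0 e1 N u v : ℤ) (h0 : 0 ≤ e0) (h1 : 0 ≤ e1) (hN0 : e0 ≤ N) (hN1 : e1 ≤ N)
    (hbez : u * e0 + v * e1 = 1) :
    ∃ q0 q1 ε : ℤ, (ε = 1 ∨ ε = -1) ∧ 0 ≤ q0 ∧ q0 ≤ N ∧ 0 ≤ q1 ∧ q1 ≤ N ∧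
      e0 * q1 - e1 * q0 = ε * N := by
  rcases le_total e1 e0 with h | h
  · obtain ⟨q0, q1, H⟩ := lmb_ordered e0 e1 N u v h1 h hN0 hbez
    exact ⟨q0, q1, 1, Or.inl rfl, H.1, H.2.1, H.2.2.1, H.2.2.2.1, by linarith [H.2.2.2.2]⟩
  · obtain ⟨p0, p1, H⟩ := lmb_ordered e1 e0 N v u h0 h hN1 (by linear_combination hbez)
    exact ⟨p1, p0, -1, Or.inr rfl, H.2.2.1, H.2.2.2.1, H.1, H.2.1, by linarith [H.2.2.2.2]⟩

set_option maxHeartbeats 1000000 in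
/-- Main arithmetic lemma: nonnegative minors, max in slot 2. -/
lemma lemA (b00 b01 b10 b11 b20 b21 d0 d1 d2 x0 x1 x2 : ℤ)
    (hd0 : d0 = b10 * b21 - b11 * b20) (hd1 : d1 = b20 * b01 - b21 * b00)
    (hd2 : d2 = b00 * b11 - b01 * b10)
    (h00 : 0 ≤ d0) (h01 : 0 ≤ d1) (hm0 : d0 ≤ d2) (hm1 : d1 ≤ d2) (h2 : 1 ≤ d2)
    (hbez : x0 * d0 + x1 * d1 + x2 * d2 = 1) :
    WitW b00 b01 b10 b11 b20 b21 := by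
  have hcr0 : d0 * b00 + d1 * b10 + d2 * b20 = 0 := by rw [hd0, hd1, hd2]; ring
  have hcr1 : d0 * b01 + d1 * b11 + d2 * b21 = 0 := by rw [hd0, hd1, hd2]; ring
  by_cases hg0 : d0 = 0 ∧ d1 = 0
  · obtain ⟨h0, h1⟩ := hg0
    have hd21 : d2 = 1 := by
      have : d2 ∣ 1 := ⟨x2, by rw [← hbez, h0, h1]; ring⟩
      exact Int.eq_one_of_dvd_one (by linarith) this
    refine ⟨b00, b01, b10, b11, 1, 0, 0, 0, 1, 0, 1, 1, ?_⟩
    refine ⟨Or.inl (by rw [← hd2, hd21]), le_refl _, le_refl _, ?_⟩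
    norm_num
  · -- extract g, e0, e1 and a Bezout pair for (e0, e1), then discard g's definition
    obtain ⟨g, e0, e1, hgpos, he0, he1, A, B, hAB⟩ :
        ∃ g e0 e1 : ℤ, 0 < g ∧ d0 = g * e0 ∧ d1 = g * e1 ∧
          ∃ A B : ℤ, A * e0 + B * e1 = 1 := by
      have hgpos : 0 < (Int.gcd d0 d1 : ℤ) := by
        rcases (not_and_or.mp hg0) with h | h
        · exact_mod_cast Int.gcd_pos_of_ne_zero_left d1 h
        · exact_mod_cast Int.gcd_pos_of_ne_zero_right d0 h
      obtain ⟨e0, he0⟩ : (Int.gcd d0 d1 : ℤ) ∣ d0 := Int.gcd_dvd_left _ _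
      obtain ⟨e1, he1⟩ : (Int.gcd d0 d1 : ℤ) ∣ d1 := Int.gcd_dvd_right _ _
      refine ⟨_, e0, e1, hgpos, he0, he1, Int.gcdA d0 d1, Int.gcdB d0 d1, ?_⟩
      have hg_ab : (Int.gcd d0 d1 : ℤ) = d0 * Int.gcdA d0 d1 + d1 * Int.gcdB d0 d1 :=
        Int.gcd_eq_gcd_ab d0 d1
      have h' : (Int.gcd d0 d1 : ℤ) * (Int.gcdA d0 d1 * e0 + Int.gcdB d0 d1 * e1)
          = (Int.gcd d0 d1 : ℤ) * 1 := by
        linear_combination (-1 : ℤ) * hg_ab + (-(Int.gcdA d0 d1)) * he0 + (-(Int.gcdB d0 d1)) * he1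
      exact mul_left_cancel₀ (ne_of_gt hgpos) h'
    have hge1 : 1 ≤ g := hgpos
    have he00 : 0 ≤ e0 := nonneg_of_mul_nonneg_right (by rw [← he0]; exact h00) hgpos
    have he10 : 0 ≤ e1 := nonneg_of_mul_nonneg_right (by rw [← he1]; exact h01) hgpos
    have he0N : e0 ≤ d2 := le_trans (by nlinarith) hm0
    have he1N : e1 ≤ d2 := le_trans (by nlinarith) hm1
    obtain ⟨q0, q1, ε, hεor, hq00, hq0N, hq10, hq1N, hq⟩ :=
      lmb_sym e0 e1 d2 A B he00 he10 he0N he1N hAB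
    obtain ⟨y, hyg⟩ : ∃ y, y * g + x2 * d2 = 1 :=
      ⟨x0 * e0 + x1 * e1, by linear_combination hbez + (-x0) * he0 + (-x1) * he1⟩
    have hm'0 : (A * q0 + B * q1) * e0 = q0 + B * ε * d2 := by
      linear_combination q0 * hAB + B * hq
    have hm'1 : (A * q0 + B * q1) * e1 = q1 - A * ε * d2 := by
      linear_combination q1 * hAB - A * hq
    obtain ⟨m, k0, k1, hq0e, hq1e⟩ :
        ∃ m k0 k1, q0 = m * d0 + d2 * k0 ∧ q1 = m * d1 + d2 * k1 := by
      refine ⟨(A * q0 + B * q1) * y, q0 * x2 - B * ε * y * g, q1 * x2 + A * ε * y * g, ?_, ?_⟩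
      · linear_combination (-(y*g)) * hm'0 + (-q0) * hyg + (-((A * q0 + B * q1)*y)) * he0
      · linear_combination (-(y*g)) * hm'1 + (-q1) * hyg + (-((A * q0 + B * q1)*y)) * he1
    obtain ⟨u0, hNu0⟩ : ∃ u0, d2 * u0 = q0 * b00 + q1 * b10 :=
      ⟨k0 * b00 + k1 * b10 - m * b20,
        by linear_combination (-b00) * hq0e + (-b10) * hq1e + (-m) * hcr0⟩
    obtain ⟨u1, hNu1⟩ : ∃ u1, d2 * u1 = q0 * b01 + q1 * b11 :=
      ⟨k0 * b01 + k1 * b11 - m * b21,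
        by linear_combination (-b01) * hq0e + (-b11) * hq1e + (-m) * hcr1⟩
    obtain ⟨v0, hgv0⟩ : ∃ v0, g * v0 = b20 :=
      ⟨-x2 * e0 * b00 - x2 * e1 * b10 + y * b20,
        by linear_combination (-x2) * hcr0 + b20 * hyg + (x2*b00) * he0 + (x2*b10) * he1⟩
    obtain ⟨v1, hgv1⟩ : ∃ v1, g * v1 = b21 :=
      ⟨-x2 * e0 * b01 - x2 * e1 * b11 + y * b21,
        by linear_combination (-x2) * hcr1 + b21 * hyg + (x2*b01) * he0 + (x2*b11) * he1⟩
    have hsc : d0 * q1 - d1 * q0 = ε * g * d2 := by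
      linear_combination g * hq + q1 * he0 + (-q0) * he1
    have hdet : (d2 * g) * (u0 * v1 - u1 * v0) = (d2 * g) * ε := by
      linear_combination (g*v1) * hNu0 + (-(g*v0)) * hNu1 + (q0*b00 + q1*b10) * hgv1
        + (-(q0*b01 + q1*b11)) * hgv0 + hsc + (-q1) * hd0 + q0 * hd1
    have hdet' : u0 * v1 - u1 * v0 = ε :=
      mul_left_cancel₀ (by positivity) hdet
    refine ⟨u0, u1, v0, v1, q0, q1, 0, 0, 0, 1, d2, g, ?_, h2, hge1, hq00, hq10, le_refl _,
      le_refl _, le_refl _, zero_le_one, ?_, ?_, ?_, ?_, ?_, ?_, ?_⟩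
    · rcases hεor with h | h
      · exact Or.inl (h ▸ hdet')
      · exact Or.inr (h ▸ hdet')
    · nlinarith [mul_le_mul_of_nonneg_right hq0N (le_of_lt hgpos)]
    · nlinarith [mul_le_mul_of_nonneg_right hq1N (le_of_lt hgpos)]
    · nlinarith [mul_le_mul_of_nonneg_left hge1 (by linarith : (0:ℤ) ≤ d2)]
    · linear_combination hNu0
    · linear_combination hNu1
    · linear_combination hgv0
    · linear_combination hgv1


noncomputable def SS (P : Set (Fin 2 → ℝ)) (a b : ℝ) : ℝ :=
  sSup ((fun x => a * x 0 + b * x 1) '' P)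

noncomputable def II (P : Set (Fin 2 → ℝ)) (a b : ℝ) : ℝ :=
  sInf ((fun x => a * x 0 + b * x 1) '' P)

section helpers

variable {P : Set (Fin 2 → ℝ)}

lemma lin_cont (a b : ℝ) : Continuous (fun x : Fin 2 → ℝ => a * x 0 + b * x 1) := by
  continuity

lemma im_compact (hc : IsCompact P) (a b : ℝ) : IsCompact ((fun x : Fin 2 → ℝ => a * x 0 + b * x 1) '' P) :=
  IsCompact.image hc (lin_cont a b)

lemma le_SS (hc : IsCompact P) {a b : ℝ} {x : Fin 2 → ℝ} (hx : x ∈ P) : a * x 0 + b * x 1 ≤ SS P a b :=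
  le_csSup (im_compact hc a b).bddAbove ⟨x, hx, rfl⟩

lemma II_le (hc : IsCompact P) {a b : ℝ} {x : Fin 2 → ℝ} (hx : x ∈ P) : II P a b ≤ a * x 0 + b * x 1 :=
  csInf_le (im_compact hc a b).bddBelow ⟨x, hx, rfl⟩

lemma SS_le (hne : P.Nonempty) {a b c : ℝ} (h : ∀ x ∈ P, a * x 0 + b * x 1 ≤ c) : SS P a b ≤ c :=
  csSup_le (hne.image _) (by rintro y ⟨x, hx, rfl⟩; exact h x hx)

lemma le_II (hne : P.Nonempty) {a b c : ℝ} (h : ∀ x ∈ P, c ≤ a * x 0 + b * x 1) : c ≤ II P a b :=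
  le_csInf (hne.image _) (by rintro y ⟨x, hx, rfl⟩; exact h x hx)

lemma SS_neg (hc : IsCompact P) (hne : P.Nonempty) (a b : ℝ) : SS P (-a) (-b) = -II P a b := by
  apply le_antisymm
  · apply SS_le hne
    intro x hx
    have := II_le hc hx (a := a) (b := b)
    linarith
  · rw [neg_le]
    apply le_II hne  -- goal : -SS P (-a) (-b) ≤ ...
    intro x hx
    have := le_SS hc hx (a := -a) (b := -b)
    linarith

lemma II_neg (hc : IsCompact P) (hne : P.Nonempty) (a b : ℝ) : II P (-a) (-b) = -SS P a b := by
  have := SS_neg (P := P) hc hne (-a) (-b)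
  simp only [neg_neg] at this
  linarith

/-- The budget inequality. -/
lemma CORE (hc : IsCompact P) (hne : P.Nonempty) (c00 c01 c10 c11 c20 c21 u0 u1 v0 v1 α0 α1 α2 β0 β1 β2 : ℝ)
    (ha0 : 0 ≤ α0) (ha1 : 0 ≤ α1) (ha2 : 0 ≤ α2)
    (hb0 : 0 ≤ β0) (hb1 : 0 ≤ β1) (hb2 : 0 ≤ β2)
    (hs0 : α0 + β0 ≤ 1) (hs1 : α1 + β1 ≤ 1) (hs2 : α2 + β2 ≤ 1)
    (hu0 : u0 = α0 * c00 + α1 * c10 + α2 * c20) (hu1 : u1 = α0 * c01 + α1 * c11 + α2 * c21)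
    (hv0 : v0 = β0 * c00 + β1 * c10 + β2 * c20) (hv1 : v1 = β0 * c01 + β1 * c11 + β2 * c21) :
    SS P (u0 + v0) (u1 + v1) - II P u0 u1 - II P v0 v1 ≤
      SS P (c00 + c10 + c20) (c01 + c11 + c21) - II P c00 c01 - II P c10 c11 - II P c20 c21 := by
  have hS : SS P (u0 + v0) (u1 + v1) ≤ SS P (c00 + c10 + c20) (c01 + c11 + c21)
      - (1 - α0 - β0) * II P c00 c01 - (1 - α1 - β1) * II P c10 c11
      - (1 - α2 - β2) * II P c20 c21 := by
    apply SS_le hne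
    intro x hx
    have h0 := mul_le_mul_of_nonneg_left (II_le hc hx (a := c00) (b := c01)) (by linarith : (0:ℝ) ≤ 1 - α0 - β0)
    have h1 := mul_le_mul_of_nonneg_left (II_le hc hx (a := c10) (b := c11)) (by linarith : (0:ℝ) ≤ 1 - α1 - β1)
    have h2 := mul_le_mul_of_nonneg_left (II_le hc hx (a := c20) (b := c21)) (by linarith : (0:ℝ) ≤ 1 - α2 - β2)
    have hS' := le_SS hc hx (a := c00 + c10 + c20) (b := c01 + c11 + c21)
    rw [hu0, hu1, hv0, hv1]
    ring_nf
    ring_nf at h0 h1 h2 hS'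
    linarith [hS', h0, h1, h2]
  have hIu : α0 * II P c00 c01 + α1 * II P c10 c11 + α2 * II P c20 c21 ≤ II P u0 u1 := by
    apply le_II hne
    intro x hx
    have h0 := mul_le_mul_of_nonneg_left (II_le hc hx (a := c00) (b := c01)) ha0
    have h1 := mul_le_mul_of_nonneg_left (II_le hc hx (a := c10) (b := c11)) ha1
    have h2 := mul_le_mul_of_nonneg_left (II_le hc hx (a := c20) (b := c21)) ha2
    rw [hu0, hu1]
    ring_nf
    ring_nf at h0 h1 h2
    linarith [h0, h1, h2]
  have hIv : β0 * II P c00 c01 + β1 * II P c10 c11 + β2 * II P c20 c21 ≤ II P v0 v1 := by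
    apply le_II hne
    intro x hx
    have h0 := mul_le_mul_of_nonneg_left (II_le hc hx (a := c00) (b := c01)) hb0
    have h1 := mul_le_mul_of_nonneg_left (II_le hc hx (a := c10) (b := c11)) hb1
    have h2 := mul_le_mul_of_nonneg_left (II_le hc hx (a := c20) (b := c21)) hb2
    rw [hv0, hv1]
    ring_nf
    ring_nf at h0 h1 h2
    linarith [h0, h1, h2]
  linarith

end helpers


noncomputable def FF (P : Set (Fin 2 → ℝ)) (r00 r01 r10 r11 r20 r21 : ℝ) : ℝ :=
  SS P (r00 + r10 + r20) (r01 + r11 + r21) - II P r00 r01 - II P r10 r11 - II P r20 r21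

section keypart
variable {P : Set (Fin 2 → ℝ)}

lemma FF_rot (a b c d e f : ℝ) : FF P a b c d e f = FF P c d e f a b := by
  unfold FF
  rw [show c + e + a = a + c + e by ring, show d + f + b = b + d + f by ring]
  ring

lemma FF_swap01 (a b c d e f : ℝ) : FF P a b c d e f = FF P c d a b e f := by
  unfold FF
  rw [show c + a + e = a + c + e by ring, show d + b + f = b + d + f by ring]
  ring

lemma FF_pivot (hc : IsCompact P) (hne : P.Nonempty) (a b c d e f : ℝ) :
    FF P a b c d (-a - c - e) (-b - d - f) = FF P a b c d e f := by
  unfold FF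
  rw [show a + c + (-a - c - e) = -e by ring, show b + d + (-b - d - f) = -f by ring,
    show (-a - c - e) = -(a + c + e) by ring, show (-b - d - f) = -(b + d + f) by ring,
    SS_neg hc hne, II_neg hc hne]
  ring

/-- analytic consequence of a witness. -/
lemma key_ready (hc : IsCompact P) (hne : P.Nonempty)
    (c00 c01 c10 c11 c20 c21 : ℤ) (hW : WitW c00 c01 c10 c11 c20 c21) :
    ∃ u0 u1 v0 v1 : ℤ, (u0 * v1 - u1 * v0 = 1 ∨ u0 * v1 - u1 * v0 = -1) ∧
      SS P ((u0 : ℝ) + v0) ((u1 : ℝ) + v1) - II P u0 u1 - II P v0 v1 ≤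
        FF P c00 c01 c10 c11 c20 c21 := by
  obtain ⟨u0, u1, v0, v1, a0, a1, a2, r0, r1, r2, N, g, hdet, hN, hg, ha0, ha1, ha2,
    hr0, hr1, hr2, hb0, hb1, hb2, hNu0, hNu1, hgv0, hgv1⟩ := hW
  have hNR : (0:ℝ) < (N:ℝ) := by exact_mod_cast hN.trans_lt' zero_lt_one
  have hgR : (0:ℝ) < (g:ℝ) := by exact_mod_cast hg.trans_lt' zero_lt_one
  refine ⟨u0, u1, v0, v1, hdet, ?_⟩
  have budget : ∀ aa rr : ℤ, 0 ≤ aa → 0 ≤ rr → aa * g + rr * N ≤ N * g →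
      (aa : ℝ)/N + (rr : ℝ)/g ≤ 1 := by
    intro aa rr h1 h2 h3
    rw [div_add_div _ _ (ne_of_gt hNR) (ne_of_gt hgR), div_le_one (by positivity)]
    have h3' : (aa:ℝ) * g + rr * N ≤ N * g := by exact_mod_cast h3
    linarith
  refine le_trans (le_of_eq ?_) (CORE hc hne (c00:ℝ) c01 c10 c11 c20 c21 u0 u1 v0 v1
    ((a0:ℝ)/N) ((a1:ℝ)/N) ((a2:ℝ)/N) ((r0:ℝ)/g) ((r1:ℝ)/g) ((r2:ℝ)/g)
    (by positivity) (by positivity) (by positivity) (by positivity) (by positivity) (by positivity)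
    (budget a0 r0 ha0 hr0 hb0) (budget a1 r1 ha1 hr1 hb1) (budget a2 r2 ha2 hr2 hb2)
    ?_ ?_ ?_ ?_)
  · rfl
  · have h := hNu0
    have : ((N:ℝ)) * u0 = a0 * c00 + a1 * c10 + a2 * c20 := by exact_mod_cast congrArg (fun z : ℤ => (z : ℝ)) h
    field_simp
    linarith [this]
  · have h := hNu1
    have : ((N:ℝ)) * u1 = a0 * c01 + a1 * c11 + a2 * c21 := by exact_mod_cast congrArg (fun z : ℤ => (z : ℝ)) h
    field_simp
    linarith [this]
  · have h := hgv0
    have : ((g:ℝ)) * v0 = r0 * c00 + r1 * c10 + r2 * c20 := by exact_mod_cast congrArg (fun z : ℤ => (z : ℝ)) h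
    field_simp
    linarith [this]
  · have h := hgv1
    have : ((g:ℝ)) * v1 = r0 * c01 + r1 * c11 + r2 * c21 := by exact_mod_cast congrArg (fun z : ℤ => (z : ℝ)) h
    field_simp
    linarith [this]

end keypart

section keymain
variable {P : Set (Fin 2 → ℝ)}

lemma key_pos (hc : IsCompact P) (hne : P.Nonempty)
    (c00 c01 c10 c11 c20 c21 x0 x1 x2 : ℤ)
    (h0 : 0 ≤ c10 * c21 - c11 * c20) (h1 : 0 ≤ c20 * c01 - c21 * c00)
    (h2 : 0 ≤ c00 * c11 - c01 * c10)
    (hbez : x0 * (c10 * c21 - c11 * c20) + x1 * (c20 * c01 - c21 * c00)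
      + x2 * (c00 * c11 - c01 * c10) = 1) :
    ∃ u0 u1 v0 v1 : ℤ, (u0 * v1 - u1 * v0 = 1 ∨ u0 * v1 - u1 * v0 = -1) ∧
      SS P ((u0 : ℝ) + v0) ((u1 : ℝ) + v1) - II P u0 u1 - II P v0 v1 ≤
        FF P c00 c01 c10 c11 c20 c21 := by
  obtain ⟨D0, hD0⟩ : ∃ D, D = c10 * c21 - c11 * c20 := ⟨_, rfl⟩
  obtain ⟨D1, hD1⟩ : ∃ D, D = c20 * c01 - c21 * c00 := ⟨_, rfl⟩
  obtain ⟨D2, hD2⟩ : ∃ D, D = c00 * c11 - c01 * c10 := ⟨_, rfl⟩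
  rw [← hD0] at h0 hbez
  rw [← hD1] at h1 hbez
  rw [← hD2] at h2 hbez
  have hnz : ¬(D0 = 0 ∧ D1 = 0 ∧ D2 = 0) := by
    rintro ⟨e0, e1, e2⟩
    rw [e0, e1, e2] at hbez
    simp at hbez
  rcases (by omega : (D0 ≤ D2 ∧ D1 ≤ D2 ∧ 1 ≤ D2) ∨ (D1 ≤ D0 ∧ D2 ≤ D0 ∧ 1 ≤ D0)
      ∨ (D0 ≤ D1 ∧ D2 ≤ D1 ∧ 1 ≤ D1)) with ⟨hA, hB, hC⟩ | ⟨hA, hB, hC⟩ | ⟨hA, hB, hC⟩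
  · exact key_ready hc hne _ _ _ _ _ _
      (lemA c00 c01 c10 c11 c20 c21 D0 D1 D2 x0 x1 x2 hD0 hD1 hD2 h0 h1 hA hB hC
        (by linarith))
  · rw [show FF P (c00:ℝ) c01 c10 c11 c20 c21
        = FF P (c10:ℝ) c11 c20 c21 c00 c01 from FF_rot _ _ _ _ _ _]
    exact key_ready hc hne _ _ _ _ _ _
      (lemA c10 c11 c20 c21 c00 c01 D1 D2 D0 x1 x2 x0 hD1 hD2 hD0 h1 h2 hA hB hC
        (by linarith))
  · rw [show FF P (c00:ℝ) c01 c10 c11 c20 c21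
        = FF P (c20:ℝ) c21 c00 c01 c10 c11 from (FF_rot _ _ _ _ _ _).symm]
    exact key_ready hc hne _ _ _ _ _ _
      (lemA c20 c21 c00 c01 c10 c11 D2 D0 D1 x2 x0 x1 hD2 hD0 hD1 h2 h0 hB hA hC
        (by linarith))

lemma key (hc : IsCompact P) (hne : P.Nonempty)
    (b00 b01 b10 b11 b20 b21 x0 x1 x2 : ℤ)
    (hbez : x0 * (b10 * b21 - b11 * b20) + x1 * (b20 * b01 - b21 * b00)
      + x2 * (b00 * b11 - b01 * b10) = 1) :
    ∃ u0 u1 v0 v1 : ℤ, (u0 * v1 - u1 * v0 = 1 ∨ u0 * v1 - u1 * v0 = -1) ∧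
      SS P ((u0 : ℝ) + v0) ((u1 : ℝ) + v1) - II P u0 u1 - II P v0 v1 ≤
        FF P b00 b01 b10 b11 b20 b21 := by
  obtain ⟨D0, hD0⟩ : ∃ D, D = b10 * b21 - b11 * b20 := ⟨_, rfl⟩
  obtain ⟨D1, hD1⟩ : ∃ D, D = b20 * b01 - b21 * b00 := ⟨_, rfl⟩
  obtain ⟨D2, hD2⟩ : ∃ D, D = b00 * b11 - b01 * b10 := ⟨_, rfl⟩
  have hp0 : ((-b00 - b10 - b20 : ℤ) : ℝ) = -(b00:ℝ) - b10 - b20 := by push_cast; ring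
  have hp1 : ((-b01 - b11 - b21 : ℤ) : ℝ) = -(b01:ℝ) - b11 - b21 := by push_cast; ring
  have rot1 : FF P (b00:ℝ) b01 b10 b11 b20 b21 = FF P (b10:ℝ) b11 b20 b21 b00 b01 :=
    FF_rot _ _ _ _ _ _
  have rot2 : FF P (b00:ℝ) b01 b10 b11 b20 b21 = FF P (b20:ℝ) b21 b00 b01 b10 b11 :=
    rot1.trans (FF_rot _ _ _ _ _ _)
  have swp : FF P (b00:ℝ) b01 b10 b11 b20 b21 = FF P (b10:ℝ) b11 b00 b01 b20 b21 :=
    FF_swap01 _ _ _ _ _ _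
  rcases (by omega : (D0 ≤ D2 ∧ D1 ≤ D2 ∧ 1 ≤ D2) ∨ (D1 ≤ D0 ∧ D2 ≤ D0 ∧ 1 ≤ D0)
      ∨ (D0 ≤ D1 ∧ D2 ≤ D1 ∧ 1 ≤ D1) ∨ (D0 ≤ 0 ∧ D1 ≤ 0 ∧ D2 ≤ 0)) with
    ⟨hA, hB, hC⟩ | ⟨hA, hB, hC⟩ | ⟨hA, hB, hC⟩ | ⟨hA, hB, hC⟩
  · -- D2 max : pivot in slot 2
    obtain ⟨u0, u1, v0, v1, hdet, hle⟩ := key_pos hc hne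
      b00 b01 b10 b11 (-b00 - b10 - b20) (-b01 - b11 - b21) (-x0) (-x1) (x0 + x1 + x2)
      (by have e : b10 * (-b01 - b11 - b21) - b11 * (-b00 - b10 - b20) = D2 - D0 := by
            rw [hD0, hD2]; ring
          linarith [e, hA])
      (by have e : (-b00 - b10 - b20) * b01 - (-b01 - b11 - b21) * b00 = D2 - D1 := by
            rw [hD1, hD2]; ring
          linarith [e, hB])
      (by have e : b00 * b11 - b01 * b10 = D2 := hD2.symm
          linarith [e, hC])
      (by linear_combination hbez)
    refine ⟨u0, u1, v0, v1, hdet, ?_⟩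
    rw [hp0, hp1, FF_pivot hc hne] at hle
    exact hle
  · -- D0 max : rotate then pivot
    obtain ⟨u0, u1, v0, v1, hdet, hle⟩ := key_pos hc hne
      b10 b11 b20 b21 (-b00 - b10 - b20) (-b01 - b11 - b21) (-x1) (-x2) (x0 + x1 + x2)
      (by have e : b20 * (-b01 - b11 - b21) - b21 * (-b00 - b10 - b20) = D0 - D1 := by
            rw [hD0, hD1]; ring
          linarith [e, hA])
      (by have e : (-b00 - b10 - b20) * b11 - (-b01 - b11 - b21) * b10 = D0 - D2 := by
            rw [hD0, hD2]; ring
          linarith [e, hB])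
      (by have e : b10 * b21 - b11 * b20 = D0 := hD0.symm
          linarith [e, hC])
      (by linear_combination hbez)
    refine ⟨u0, u1, v0, v1, hdet, ?_⟩
    rw [hp0, hp1] at hle
    rw [show (-(b00:ℝ) - b10 - b20) = -(b10:ℝ) - b20 - b00 by ring,
      show (-(b01:ℝ) - b11 - b21) = -(b11:ℝ) - b21 - b01 by ring,
      FF_pivot hc hne, ← rot1] at hle
    exact hle
  · -- D1 max
    obtain ⟨u0, u1, v0, v1, hdet, hle⟩ := key_pos hc hne
      b20 b21 b00 b01 (-b00 - b10 - b20) (-b01 - b11 - b21) (-x2) (-x0) (x0 + x1 + x2)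
      (by have e : b00 * (-b01 - b11 - b21) - b01 * (-b00 - b10 - b20) = D1 - D2 := by
            rw [hD1, hD2]; ring
          linarith [e, hA])
      (by have e : (-b00 - b10 - b20) * b21 - (-b01 - b11 - b21) * b20 = D1 - D0 := by
            rw [hD0, hD1]; ring
          linarith [e, hB])
      (by have e : b20 * b01 - b21 * b00 = D1 := hD1.symm
          linarith [e, hC])
      (by linear_combination hbez)
    refine ⟨u0, u1, v0, v1, hdet, ?_⟩
    rw [hp0, hp1] at hle
    rw [show (-(b00:ℝ) - b10 - b20) = -(b20:ℝ) - b00 - b10 by ring,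
      show (-(b01:ℝ) - b11 - b21) = -(b21:ℝ) - b01 - b11 by ring,
      FF_pivot hc hne, ← rot2] at hle
    exact hle
  · -- all ≤ 0 : swap rows 0,1
    obtain ⟨u0, u1, v0, v1, hdet, hle⟩ := key_pos hc hne
      b10 b11 b00 b01 b20 b21 (-x1) (-x0) (-x2)
      (by have e : b00 * b21 - b01 * b20 = -D1 := by rw [hD1]; ring
          linarith [e, hB])
      (by have e : b20 * b11 - b21 * b10 = -D0 := by rw [hD0]; ring
          linarith [e, hA])
      (by have e : b10 * b01 - b11 * b00 = -D2 := by rw [hD2]; ring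
          linarith [e, hC])
      (by linear_combination hbez)
    refine ⟨u0, u1, v0, v1, hdet, ?_⟩
    rw [← swp] at hle
    exact hle

end keymain




section assembly
variable {P : Set (Fin 2 → ℝ)}

lemma SS_shift (hc : IsCompact P) (hne : P.Nonempty) (a b c : ℝ) :
    sSup ((fun x : Fin 2 → ℝ => a * x 0 + b * x 1 + c) '' P) = SS P a b + c := by
  have hbdd : BddAbove ((fun x : Fin 2 → ℝ => a * x 0 + b * x 1 + c) '' P) :=
    (hc.image (by continuity)).bddAbove
  apply le_antisymm
  · apply csSup_le (hne.image _)
    rintro y ⟨x, hx, rfl⟩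
    have := le_SS hc hx (a := a) (b := b)
    simp only []
    linarith
  · have h2 : SS P a b ≤ sSup ((fun x : Fin 2 → ℝ => a * x 0 + b * x 1 + c) '' P) - c :=
      SS_le hne (fun x hx => by
        have := le_csSup hbdd ⟨x, hx, rfl⟩
        simp only [] at this
        linarith)
    linarith

lemma II_shift (hc : IsCompact P) (hne : P.Nonempty) (a b c : ℝ) :
    sInf ((fun x : Fin 2 → ℝ => a * x 0 + b * x 1 + c) '' P) = II P a b + c := by
  have hbdd : BddBelow ((fun x : Fin 2 → ℝ => a * x 0 + b * x 1 + c) '' P) :=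
    (hc.image (by continuity)).bddBelow
  apply le_antisymm
  · have h2 : II P a b ≥ sInf ((fun x : Fin 2 → ℝ => a * x 0 + b * x 1 + c) '' P) - c :=
      le_II hne (fun x hx => by
        have := csInf_le hbdd ⟨x, hx, rfl⟩
        simp only [] at this
        linarith)
    linarith
  · apply le_csInf (hne.image _)
    rintro y ⟨x, hx, rfl⟩
    have := II_le hc hx (a := a) (b := b)
    simp only []
    linarith

lemma lone3_image (hc : IsCompact P) (hne : P.Nonempty)
    (A : Matrix (Fin 3) (Fin 3) ℤ) (w : Fin 3 → ℤ) :
    lone3 ((fun x => Matrix.mulVec (A.map (Int.cast : ℤ → ℝ)) x + zcast w) ''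
      ((fun x : Fin 2 → ℝ => ![x 0, x 1, (0:ℝ)]) '' P))
    = FF P (A 0 0 : ℝ) (A 0 1) (A 1 0) (A 1 1) (A 2 0) (A 2 1) := by
  rw [Set.image_image]
  have hcoord : ∀ (i : Fin 3) (x : Fin 2 → ℝ),
      (Matrix.mulVec (A.map (Int.cast : ℤ → ℝ)) ![x 0, x 1, 0] + zcast w) i
      = (A i 0 : ℝ) * x 0 + (A i 1 : ℝ) * x 1 + (w i : ℝ) := by
    intro i x
    simp [Matrix.mulVec, dotProduct, Fin.sum_univ_three, zcast, Matrix.map_apply]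
  unfold lone3
  rw [Set.image_image, Set.image_image, Set.image_image, Set.image_image]
  have e0 : (fun x : Fin 2 → ℝ =>
        (Matrix.mulVec (A.map (Int.cast : ℤ → ℝ)) ![x 0, x 1, 0] + zcast w) 0
        + (Matrix.mulVec (A.map (Int.cast : ℤ → ℝ)) ![x 0, x 1, 0] + zcast w) 1
        + (Matrix.mulVec (A.map (Int.cast : ℤ → ℝ)) ![x 0, x 1, 0] + zcast w) 2)
      = fun x : Fin 2 → ℝ =>
        ((A 0 0 : ℝ) + (A 1 0) + (A 2 0)) * x 0 + ((A 0 1 : ℝ) + (A 1 1) + (A 2 1)) * x 1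
          + ((w 0 : ℝ) + w 1 + w 2) := by
    funext x
    rw [hcoord 0 x, hcoord 1 x, hcoord 2 x]
    ring
  have e1 : ∀ i : Fin 3, (fun x : Fin 2 → ℝ =>
        (Matrix.mulVec (A.map (Int.cast : ℤ → ℝ)) ![x 0, x 1, 0] + zcast w) i)
      = fun x : Fin 2 → ℝ => (A i 0 : ℝ) * x 0 + (A i 1 : ℝ) * x 1 + (w i : ℝ) := by
    intro i
    funext x
    rw [hcoord i x]
  rw [e0, e1 0, e1 1, e1 2, SS_shift hc hne, II_shift hc hne, II_shift hc hne, II_shift hc hne]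
  unfold FF
  ring

lemma lone2_image (hc : IsCompact P) (hne : P.Nonempty)
    (A : Matrix (Fin 2) (Fin 2) ℤ) (w : Fin 2 → ℤ) :
    lone2 ((fun x => Matrix.mulVec (A.map (Int.cast : ℤ → ℝ)) x + zcast w) '' P)
    = SS P ((A 0 0 : ℝ) + (A 1 0)) ((A 0 1 : ℝ) + (A 1 1))
      - II P (A 0 0 : ℝ) (A 0 1) - II P (A 1 0 : ℝ) (A 1 1) := by
  have hcoord : ∀ (i : Fin 2) (x : Fin 2 → ℝ),
      (Matrix.mulVec (A.map (Int.cast : ℤ → ℝ)) x + zcast w) i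
      = (A i 0 : ℝ) * x 0 + (A i 1 : ℝ) * x 1 + (w i : ℝ) := by
    intro i x
    simp [Matrix.mulVec, dotProduct, Fin.sum_univ_two, zcast, Matrix.map_apply]
    fin_cases i <;> simp
  unfold lone2
  rw [Set.image_image, Set.image_image, Set.image_image]
  have e0 : (fun x : Fin 2 → ℝ =>
        (Matrix.mulVec (A.map (Int.cast : ℤ → ℝ)) x + zcast w) 0
        + (Matrix.mulVec (A.map (Int.cast : ℤ → ℝ)) x + zcast w) 1)
      = fun x : Fin 2 → ℝ =>
        ((A 0 0 : ℝ) + (A 1 0)) * x 0 + ((A 0 1 : ℝ) + (A 1 1)) * x 1 + ((w 0 : ℝ) + w 1) := by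
    funext x
    rw [hcoord 0 x, hcoord 1 x]
    ring
  have e1 : ∀ i : Fin 2, (fun x : Fin 2 → ℝ =>
        (Matrix.mulVec (A.map (Int.cast : ℤ → ℝ)) x + zcast w) i)
      = fun x : Fin 2 → ℝ => (A i 0 : ℝ) * x 0 + (A i 1 : ℝ) * x 1 + (w i : ℝ) := by
    intro i
    funext x
    rw [hcoord i x]
  rw [e0, e1 0, e1 1, SS_shift hc hne, II_shift hc hne, II_shift hc hne]
  ring

end assembly

section finalpieces
variable {P : Set (Fin 2 → ℝ)}

lemma FF_nonneg (hc : IsCompact P) (hne : P.Nonempty) (a b c d e f : ℝ) :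
    0 ≤ FF P a b c d e f := by
  obtain ⟨x, hx⟩ := hne
  have h0 := II_le hc hx (a := a) (b := b)
  have h1 := II_le hc hx (a := c) (b := d)
  have h2 := II_le hc hx (a := e) (b := f)
  have hS := le_SS hc hx (a := a + c + e) (b := b + d + f)
  unfold FF
  nlinarith [h0, h1, h2, hS]

lemma GG_nonneg (hc : IsCompact P) (hne : P.Nonempty) (a b c d : ℝ) :
    0 ≤ SS P (a + c) (b + d) - II P a b - II P c d := by
  obtain ⟨x, hx⟩ := hne
  have h0 := II_le hc hx (a := a) (b := b)
  have h1 := II_le hc hx (a := c) (b := d)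
  have hS := le_SS hc hx (a := a + c) (b := b + d)
  nlinarith [h0, h1, hS]

lemma II_zero (hc : IsCompact P) (hne : P.Nonempty) : II P 0 0 = 0 := by
  apply le_antisymm
  · obtain ⟨x, hx⟩ := hne
    have := II_le hc hx (a := (0:ℝ)) (b := 0)
    simpa using this
  · apply le_II hne
    intro y hy
    simp

end finalpieces

theorem lsDelta3_of_planar (P : Set (Fin 2 → ℝ)) (hP : IsLatticePolytope P) (l : ℝ)
    (hl : lsDelta2 P = l) :
    lsDelta3 ((fun x => ![x 0, x 1, (0 : ℝ)]) '' P) = l := by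
  obtain ⟨V, hVne, hVint, hPV⟩ := hP
  have hc : IsCompact P := by
    rw [hPV]; exact V.finite_toSet.isCompact_convexHull ℝ
  have hne : P.Nonempty := by
    rw [hPV]
    obtain ⟨v, hv⟩ := hVne
    exact ⟨v, subset_convexHull ℝ _ hv⟩
  rw [← hl]
  unfold lsDelta3 lsDelta2
  -- the two index sets
  set S3 : Set ℝ := {r : ℝ | ∃ A : Matrix (Fin 3) (Fin 3) ℤ, IsUnit A.det ∧ ∃ v : Fin 3 → ℤ,
    r = lone3 ((fun x => Matrix.mulVec (A.map (Int.cast : ℤ → ℝ)) x + zcast v) ''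
      ((fun x : Fin 2 → ℝ => ![x 0, x 1, (0:ℝ)]) '' P))} with hS3def
  set S2 : Set ℝ := {r : ℝ | ∃ A : Matrix (Fin 2) (Fin 2) ℤ, IsUnit A.det ∧ ∃ v : Fin 2 → ℤ,
    r = lone2 ((fun x => Matrix.mulVec (A.map (Int.cast : ℤ → ℝ)) x + zcast v) '' P)} with hS2def
  -- embedding of S2 into S3
  have h23 : ∀ r ∈ S2, r ∈ S3 := by
    rintro r ⟨A, hU, v, rfl⟩
    refine ⟨Matrix.of ![![A 0 0, A 0 1, 0], ![A 1 0, A 1 1, 0], ![0, 0, 1]], ?_, ![v 0, v 1, 0], ?_⟩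
    · have : (Matrix.of ![![A 0 0, A 0 1, 0], ![A 1 0, A 1 1, 0], ![0, 0, 1]]).det = A.det := by
        rw [Matrix.det_fin_three, Matrix.det_fin_two]
        simp [Matrix.cons_val_two, Matrix.tail_cons]
      rw [this]; exact hU
    · rw [lone2_image hc hne A v, lone3_image hc hne _ _]
      simp only [Matrix.of_apply, Matrix.cons_val', Matrix.cons_val_zero, Matrix.cons_val_one,
        Matrix.head_cons, Matrix.empty_val', Matrix.cons_val_fin_one, Matrix.head_fin_const,
        Matrix.cons_val_two, Matrix.tail_cons]
      push_cast
      unfold FF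
      rw [II_zero hc hne,
        show ((A 0 0 : ℝ) + A 1 0 + 0) = (A 0 0 : ℝ) + A 1 0 by ring,
        show ((A 0 1 : ℝ) + A 1 1 + 0) = (A 0 1 : ℝ) + A 1 1 by ring]
      ring
  have hne2 : S2.Nonempty := by
    refine ⟨_, ⟨1, by simp, 0, rfl⟩⟩
  have hne3 : S3.Nonempty := by
    obtain ⟨r, hr⟩ := hne2
    exact ⟨r, h23 r hr⟩
  have hb2 : BddBelow S2 := by
    refine ⟨0, ?_⟩
    rintro r ⟨A, hU, v, rfl⟩
    rw [lone2_image hc hne A v]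
    exact GG_nonneg hc hne _ _ _ _
  have hb3 : BddBelow S3 := by
    refine ⟨0, ?_⟩
    rintro r ⟨A, hU, v, rfl⟩
    rw [lone3_image hc hne A v]
    exact FF_nonneg hc hne _ _ _ _ _ _
  apply le_antisymm
  · -- sInf S3 ≤ sInf S2
    apply le_csInf hne2
    intro r hr
    exact csInf_le hb3 (h23 r hr)
  · -- sInf S2 ≤ sInf S3
    apply le_csInf hne3
    rintro r ⟨A, hU, v, rfl⟩
    rw [lone3_image hc hne A v]
    have hdf := Matrix.det_fin_three A
    have hdet2 := Int.isUnit_iff.mp hU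
    have hbez : ∃ x0 x1 x2 : ℤ,
        x0 * (A 1 0 * A 2 1 - A 1 1 * A 2 0) + x1 * (A 2 0 * A 0 1 - A 2 1 * A 0 0)
          + x2 * (A 0 0 * A 1 1 - A 0 1 * A 1 0) = 1 := by
      rcases hdet2 with h | h
      · exact ⟨A 0 2, A 1 2, A 2 2, by rw [hdf] at h; linear_combination h⟩
      · exact ⟨-(A 0 2), -(A 1 2), -(A 2 2), by rw [hdf] at h; linear_combination -h⟩
    obtain ⟨x0, x1, x2, hbez⟩ := hbez
    obtain ⟨u0, u1, v0, v1, hdet', hle⟩ := key hc hne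
      (A 0 0) (A 0 1) (A 1 0) (A 1 1) (A 2 0) (A 2 1) x0 x1 x2 hbez
    have hmem : lone2 ((fun x => Matrix.mulVec ((Matrix.of ![![u0, u1], ![v0, v1]]).map
        (Int.cast : ℤ → ℝ)) x + zcast (0 : Fin 2 → ℤ)) '' P) ∈ S2 := by
      refine ⟨Matrix.of ![![u0, u1], ![v0, v1]], ?_, 0, rfl⟩
      have : (Matrix.of ![![u0, u1], ![v0, v1]]).det = u0 * v1 - u1 * v0 := by
        rw [Matrix.det_fin_two]; simp
      rw [this]
      rcases hdet' with h | h
      · rw [h]; exact isUnit_one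
      · rw [h]; exact isUnit_one.neg
    refine le_trans (csInf_le hb2 hmem) ?_
    rw [lone2_image hc hne _ _]
    simp only [Matrix.of_apply, Matrix.cons_val', Matrix.cons_val_zero, Matrix.cons_val_one,
      Matrix.head_cons, Matrix.empty_val', Matrix.cons_val_fin_one]
    exact hle
end

section
/- Let P be a nonempty compact convex set in R^3 such that the standard basis (e_1, e_2, e_3) is reduced with respect to P and w_{e_3}(P) >= w_{e_1}(P) + w_{e_2}(P). Then for any h = a*h_1 + b*h_2 + c*h_3 with a,b in {1,-1} and c in {2,-2} (writing h_1=e_1, h_2=e_2, h_3=e_3), we have w_h(P) >= w_{e_3}(P). -/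
open scoped BigOperators

/-!
The width `w_h(P)` is a seminorm in `h` (subadditive and absolutely homogeneous), since both
extremes of `⟪h, ·⟫` are attained on the compact set `P`. Writing `h = a e₁ + b e₂ + c e₃`,
the triangle inequality gives
`2 w_{e₃} = w_{c e₃} ≤ w_h + w_{a e₁ + b e₂} ≤ w_h + w_{e₁} + w_{e₂} ≤ w_h + w_{e₃}`.
-/

open Matrix

namespace width

variable {d : ℕ} {P : Set (Fin d → ℝ)}

theorem eq_sSup_sub_sInf (P : Set (Fin d → ℝ)) (h : Fin d → ℝ) :
    width P h = sSup ((h ⬝ᵥ ·) '' P) - sInf ((h ⬝ᵥ ·) '' P) := rfl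

theorem isCompact_image_dotProduct (hP : IsCompact P) (h : Fin d → ℝ) :
    IsCompact ((h ⬝ᵥ ·) '' P) :=
  hP.image (by fun_prop)

theorem dotProduct_sub_le (hP : IsCompact P) (h : Fin d → ℝ) {x y : Fin d → ℝ}
    (hx : x ∈ P) (hy : y ∈ P) : h ⬝ᵥ x - h ⬝ᵥ y ≤ width P h := by
  have hK := isCompact_image_dotProduct hP h
  rw [eq_sSup_sub_sInf]
  exact sub_le_sub (le_csSup hK.bddAbove ⟨x, hx, rfl⟩) (csInf_le hK.bddBelow ⟨y, hy, rfl⟩)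

theorem exists_eq_dotProduct_sub (hP : IsCompact P) (hne : P.Nonempty) (h : Fin d → ℝ) :
    ∃ x ∈ P, ∃ y ∈ P, width P h = h ⬝ᵥ x - h ⬝ᵥ y := by
  have hK := isCompact_image_dotProduct hP h
  obtain ⟨x, hx, hxSup⟩ := hK.sSup_mem (hne.image _)
  obtain ⟨y, hy, hyInf⟩ := hK.sInf_mem (hne.image _)
  exact ⟨x, hx, y, hy, by rw [eq_sSup_sub_sInf, ← hxSup, ← hyInf]⟩

theorem add_le (hP : IsCompact P) (hne : P.Nonempty) (g h : Fin d → ℝ) :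
    width P (g + h) ≤ width P g + width P h := by
  obtain ⟨x, hx, y, hy, hw⟩ := exists_eq_dotProduct_sub hP hne (g + h)
  calc width P (g + h) = (g ⬝ᵥ x - g ⬝ᵥ y) + (h ⬝ᵥ x - h ⬝ᵥ y) := by
        rw [hw, add_dotProduct, add_dotProduct]; ring
    _ ≤ width P g + width P h :=
        add_le_add (dotProduct_sub_le hP g hx hy) (dotProduct_sub_le hP h hx hy)

theorem smul_le (hP : IsCompact P) (hne : P.Nonempty) (c : ℝ) (h : Fin d → ℝ) :
    width P (c • h) ≤ |c| * width P h := by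
  obtain ⟨x, hx, y, hy, hw⟩ := exists_eq_dotProduct_sub hP hne (c • h)
  have habs : |h ⬝ᵥ x - h ⬝ᵥ y| ≤ width P h :=
    abs_sub_le_iff.2 ⟨dotProduct_sub_le hP h hx hy, dotProduct_sub_le hP h hy hx⟩
  calc width P (c • h) = c * (h ⬝ᵥ x - h ⬝ᵥ y) := by
        rw [hw, smul_dotProduct, smul_dotProduct, smul_eq_mul, smul_eq_mul, mul_sub]
    _ ≤ |c| * |h ⬝ᵥ x - h ⬝ᵥ y| := by rw [← abs_mul]; exact le_abs_self _
    _ ≤ |c| * width P h := mul_le_mul_of_nonneg_left habs (abs_nonneg c)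

theorem smul (hP : IsCompact P) (hne : P.Nonempty) (c : ℝ) (h : Fin d → ℝ) :
    width P (c • h) = |c| * width P h := by
  refine le_antisymm (smul_le hP hne c h) ?_
  rcases eq_or_ne c 0 with rfl | hc
  · simp only [abs_zero, zero_mul, zero_smul]
    obtain ⟨x, hx⟩ := hne
    simpa using dotProduct_sub_le hP 0 hx hx
  · calc |c| * width P h = |c| * width P (c⁻¹ • c • h) := by rw [inv_smul_smul₀ hc]
      _ ≤ |c| * (|c⁻¹| * width P (c • h)) :=
        mul_le_mul_of_nonneg_left (smul_le hP hne _ _) (abs_nonneg c)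
      _ = width P (c • h) := by rw [abs_inv, mul_inv_cancel_left₀ (abs_ne_zero.2 hc)]

theorem sub_le (hP : IsCompact P) (hne : P.Nonempty) (g h : Fin d → ℝ) :
    width P (g - h) ≤ width P g + width P h := by
  have hneg : width P (-h) = width P h := by
    rw [← neg_one_smul ℝ h, smul hP hne, abs_neg, abs_one, one_mul]
  simpa [sub_eq_add_neg, hneg] using add_le hP hne g (-h)

theorem abs_smul_le_add (hP : IsCompact P) (hne : P.Nonempty) (a b c : ℝ)
    (e₁ e₂ e₃ : Fin d → ℝ) :
    |c| * width P e₃ ≤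
      width P (a • e₁ + b • e₂ + c • e₃) + |a| * width P e₁ + |b| * width P e₂ :=
  calc |c| * width P e₃ = width P ((a • e₁ + b • e₂ + c • e₃) - (a • e₁ + b • e₂)) := by
        rw [add_sub_cancel_left, smul hP hne]
    _ ≤ width P (a • e₁ + b • e₂ + c • e₃) + (width P (a • e₁) + width P (b • e₂)) :=
        (sub_le hP hne _ _).trans (add_le_add_right (add_le hP hne _ _) _)
    _ = width P (a • e₁ + b • e₂ + c • e₃) + |a| * width P e₁ + |b| * width P e₂ := by
        rw [smul hP hne, smul hP hne]; ring

end width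

theorem reduced_large_combinations_general (P : Set (Fin 3 → ℝ)) (hne : P.Nonempty)
    (hcpt : IsCompact P)
    (e1 e2 e3 : Fin 3 → ℝ)
    (big : width P e1 + width P e2 ≤ width P e3)
    (a b c : ℤ) (ha : a = 1 ∨ a = -1) (hb : b = 1 ∨ b = -1) (hc : c = 2 ∨ c = -2) :
    width P e3 ≤ width P ((a : ℝ) • e1 + (b : ℝ) • e2 + (c : ℝ) • e3) := by
  have hkey := width.abs_smul_le_add hcpt hne a b c e1 e2 e3
  have habs_a : |(a : ℝ)| = 1 := by rcases ha with rfl | rfl <;> norm_num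
  have habs_b : |(b : ℝ)| = 1 := by rcases hb with rfl | rfl <;> norm_num
  have habs_c : |(c : ℝ)| = 2 := by rcases hc with rfl | rfl <;> norm_num
  rw [habs_a, habs_b, habs_c] at hkey
  linarith

theorem reduced_large_combinations (P : Set (Fin 3 → ℝ)) (hne : P.Nonempty)
    (hcpt : IsCompact P) (hconv : Convex ℝ P)
    (e1 e2 e3 : Fin 3 → ℝ) (he1 : e1 = Pi.single 0 1) (he2 : e2 = Pi.single 1 1)
    (he3 : e3 = Pi.single 2 1)
    (r1 : width P e1 ≤ width P e2) (r2 : width P e2 ≤ width P e3)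
    (r3 : width P e2 ≤ width P (e1 + e2)) (r4 : width P e2 ≤ width P (e1 - e2))
    (r5 : ∀ m n : ℤ, width P e3 ≤ width P ((m : ℝ) • e1 + (n : ℝ) • e2 + e3))
    (big : width P e1 + width P e2 ≤ width P e3)
    (a b c : ℤ) (ha : a = 1 ∨ a = -1) (hb : b = 1 ∨ b = -1) (hc : c = 2 ∨ c = -2) :
    width P e3 ≤ width P ((a : ℝ) • e1 + (b : ℝ) • e2 + (c : ℝ) • e3) :=
  reduced_large_combinations_general P hne hcpt e1 e2 e3 big a b c ha hb hc
end

section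
/- Let P be a lattice polytope in R^3 contained in the unit cube [0,1]^3. Then ls_Delta(P) <= 3, with equality if and only if P = [0,1]^3. -/
open scoped BigOperators

/-!
A lattice polytope in `[0,1]³` is the convex hull of some of the cube's vertices, and `l₁` of a
convex hull of finitely many points only depends on the points. The identity map gives `l₁ ≤ 3`.
If a vertex `w` of the cube is missing from `P`, the reflection of the cube sending `w` to
`(1,1,1)` maps every vertex of `P` to a 0/1-point with a zero coordinate, so `l₁ ≤ 2` after it.
For the full cube, every unimodular `A` has nonzero integer columns, and each column contributes
at least `1` to `l₁` of the image of the cube, so `l₁ ≥ 3` for every unimodular image.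
-/

open Matrix Finset

section ConvexHull

variable {E : Type*} [AddCommGroup E] [Module ℝ E] {s : Set E}

lemma csSup_image_convexHull (f : E →ₗ[ℝ] ℝ) (hs : s.Finite) :
    sSup (f '' convexHull ℝ s) = sSup (f '' s) := by
  rcases s.eq_empty_or_nonempty with rfl | hne
  · simp
  have hbound : ∀ z ∈ f '' convexHull ℝ s, z ≤ sSup (f '' s) := by
    rintro _ ⟨x, hx, rfl⟩
    obtain ⟨y, hy, hxy⟩ :=
      (f.convexOn convex_univ).exists_ge_of_mem_convexHull (Set.subset_univ _) hx
    exact hxy.trans (le_csSup (hs.image f).bddAbove ⟨y, hy, rfl⟩)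
  exact le_antisymm (csSup_le ((hne.mono (subset_convexHull ℝ s)).image f) hbound)
    (csSup_le_csSup ⟨_, hbound⟩ (hne.image f) (Set.image_mono (subset_convexHull ℝ s)))

lemma csInf_image_convexHull (f : E →ₗ[ℝ] ℝ) (hs : s.Finite) :
    sInf (f '' convexHull ℝ s) = sInf (f '' s) := by
  rcases s.eq_empty_or_nonempty with rfl | hne
  · simp
  have hbound : ∀ z ∈ f '' convexHull ℝ s, sInf (f '' s) ≤ z := by
    rintro _ ⟨x, hx, rfl⟩
    obtain ⟨y, hy, hxy⟩ :=
      (f.concaveOn convex_univ).exists_le_of_mem_convexHull (Set.subset_univ _) hx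
    exact (csInf_le (hs.image f).bddBelow ⟨y, hy, rfl⟩).trans hxy
  exact le_antisymm
    (csInf_le_csInf ⟨_, hbound⟩ (hne.image f) (Set.image_mono (subset_convexHull ℝ s)))
    (le_csInf ((hne.mono (subset_convexHull ℝ s)).image f) hbound)

end ConvexHull

section LOne

variable {S : Set (Fin 3 → ℝ)}

lemma lone3_convexHull (hS : S.Finite) : lone3 (convexHull ℝ S) = lone3 S := by
  let π (i : Fin 3) : (Fin 3 → ℝ) →ₗ[ℝ] ℝ := LinearMap.proj i
  have hsum : sSup ((fun x : Fin 3 → ℝ => x 0 + x 1 + x 2) '' convexHull ℝ S) =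
      sSup ((fun x => x 0 + x 1 + x 2) '' S) :=
    csSup_image_convexHull (π 0 + π 1 + π 2) hS
  have hmin (i : Fin 3) : sInf ((fun x : Fin 3 → ℝ => x i) '' convexHull ℝ S) =
      sInf ((fun x => x i) '' S) :=
    csInf_image_convexHull (π i) hS
  simp only [lone3, hsum, hmin]

lemma lone3_image_convexHull (f : (Fin 3 → ℝ) →ᵃ[ℝ] (Fin 3 → ℝ)) (hS : S.Finite) :
    lone3 (f '' convexHull ℝ S) = lone3 (f '' S) := by
  rw [f.image_convexHull, lone3_convexHull (hS.image f)]

lemma le_lone3 (hS : S.Finite) {p : Fin 3 → ℝ} (hp : p ∈ S) {q : Fin 3 → Fin 3 → ℝ}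
    (hq : ∀ i, q i ∈ S) : p 0 + p 1 + p 2 - q 0 0 - q 1 1 - q 2 2 ≤ lone3 S := by
  have hsup := le_csSup (hS.image fun x => x 0 + x 1 + x 2).bddAbove ⟨p, hp, rfl⟩
  have hinf (i : Fin 3) := csInf_le (hS.image fun x => x i).bddBelow ⟨q i, hq i, rfl⟩
  simp only [lone3]
  linarith [hinf 0, hinf 1, hinf 2]

lemma lone3_nonneg (hS : S.Finite) : 0 ≤ lone3 S := by
  rcases S.eq_empty_or_nonempty with rfl | ⟨p, hp⟩
  · simp [lone3]
  linarith [le_lone3 hS hp (q := fun _ => p) fun _ => hp]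

lemma lone3_le_of_nonneg (hS : S.Nonempty) (hnonneg : ∀ x ∈ S, ∀ i, 0 ≤ x i) {M : ℝ}
    (hsum : ∀ x ∈ S, x 0 + x 1 + x 2 ≤ M) : lone3 S ≤ M := by
  have hsup : sSup ((fun x => x 0 + x 1 + x 2) '' S) ≤ M := by
    refine csSup_le (hS.image _) ?_
    rintro _ ⟨x, hx, rfl⟩
    exact hsum x hx
  have hinf (i : Fin 3) : 0 ≤ sInf ((fun x => x i) '' S) := by
    refine le_csInf (hS.image _) ?_
    rintro _ ⟨x, hx, rfl⟩
    exact hnonneg x hx i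
  simp only [lone3]
  linarith [hinf 0, hinf 1, hinf 2]

end LOne

-- Its coercion is definitionally the map `x ↦ A x + v` in the definition of `lsDelta3`.
def intAffineMap {d : ℕ} (A : Matrix (Fin d) (Fin d) ℤ) (v : Fin d → ℤ) :
    (Fin d → ℝ) →ᵃ[ℝ] (Fin d → ℝ) :=
  (toLin' (A.map (Int.cast : ℤ → ℝ))).toAffineMap + AffineMap.const ℝ _ (zcast v)

lemma intAffineMap_apply {d : ℕ} (A : Matrix (Fin d) (Fin d) ℤ) (v : Fin d → ℤ)
    (x : Fin d → ℝ) (i : Fin d) :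
    intAffineMap A v x i = ∑ j, (A i j : ℝ) * x j + v i := rfl

lemma intAffineMap_one_zero {d : ℕ} :
    intAffineMap (1 : Matrix (Fin d) (Fin d) ℤ) 0 = AffineMap.id ℝ _ := by
  ext x i
  simp [intAffineMap_apply, Matrix.one_apply]

section LSDelta

variable {S : Set (Fin 3 → ℝ)}

lemma lsDelta3_convexHull_le (hS : S.Finite) {A : Matrix (Fin 3) (Fin 3) ℤ}
    (hA : IsUnit A.det) (v : Fin 3 → ℤ) :
    lsDelta3 (convexHull ℝ S) ≤ lone3 (intAffineMap A v '' S) := by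
  refine csInf_le ⟨0, ?_⟩ ⟨A, hA, v, (lone3_image_convexHull _ hS).symm⟩
  rintro _ ⟨B, -, w, rfl⟩
  exact (lone3_image_convexHull (intAffineMap B w) hS).symm ▸ lone3_nonneg (hS.image _)

lemma le_lsDelta3_convexHull (hS : S.Finite) {r : ℝ}
    (h : ∀ A : Matrix (Fin 3) (Fin 3) ℤ, IsUnit A.det → ∀ v,
      r ≤ lone3 (intAffineMap A v '' S)) :
    r ≤ lsDelta3 (convexHull ℝ S) := by
  refine le_csInf ⟨_, 1, by simp, 0, rfl⟩ ?_
  rintro _ ⟨A, hA, v, rfl⟩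
  exact (h A hA v).trans_eq (lone3_image_convexHull _ hS).symm

end LSDelta

noncomputable def cubeVertices (d : ℕ) : Finset (Fin d → ℝ) :=
  Fintype.piFinset fun _ => {0, 1}

lemma mem_cubeVertices {d : ℕ} {u : Fin d → ℝ} :
    u ∈ cubeVertices d ↔ ∀ i, u i = 0 ∨ u i = 1 := by
  simp [cubeVertices]

lemma convexHull_cubeVertices (d : ℕ) :
    convexHull ℝ ↑(cubeVertices d) = {x : Fin d → ℝ | ∀ i, 0 ≤ x i ∧ x i ≤ 1} := by
  ext x
  simp [cubeVertices, Fintype.coe_piFinset, convexHull_pi, convexHull_pair, segment_eq_Icc,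
    Pi.le_def, forall_and]

lemma mem_cubeVertices_of_int {d : ℕ} {u : Fin d → ℝ} (hint : ∀ i, ∃ n : ℤ, u i = n)
    (hcube : ∀ i, 0 ≤ u i ∧ u i ≤ 1) : u ∈ cubeVertices d := by
  refine mem_cubeVertices.2 fun i => ?_
  obtain ⟨n, hn⟩ := hint i
  obtain ⟨h0, h1⟩ := hcube i
  rw [hn] at h0 h1 ⊢
  have : n = 0 ∨ n = 1 := by
    have : (0 : ℤ) ≤ n := mod_cast h0
    have : n ≤ 1 := mod_cast h1
    omega
  rcases this with rfl | rfl <;> simp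

lemma exists_intAffineMap_cubeVertices_eq_ite {d : ℕ} {w : Fin d → ℝ}
    (hw : w ∈ cubeVertices d) :
    ∃ A : Matrix (Fin d) (Fin d) ℤ, IsUnit A.det ∧ ∃ v : Fin d → ℤ,
      ∀ u ∈ cubeVertices d, ∀ i, intAffineMap A v u i = if u i = w i then 1 else 0 := by
  classical
  refine ⟨diagonal fun i => if w i = 1 then 1 else -1, ?_,
    fun i => if w i = 1 then 0 else 1, ?_⟩
  · rw [det_diagonal, IsUnit.prod_univ_iff]
    intro i
    split_ifs <;> simp
  · intro u hu i
    rcases mem_cubeVertices.1 hu i with hui | hui <;>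
      rcases mem_cubeVertices.1 hw i with hwi | hwi <;>
      simp [intAffineMap_apply, diagonal_apply, hui, hwi]

lemma exists_lone3_image_le_two {V : Finset (Fin 3 → ℝ)} (hVne : V.Nonempty)
    (hV : V ⊆ cubeVertices 3) {w : Fin 3 → ℝ} (hw : w ∈ cubeVertices 3) (hwV : w ∉ V) :
    ∃ A : Matrix (Fin 3) (Fin 3) ℤ, IsUnit A.det ∧ ∃ v,
      lone3 (intAffineMap A v '' ↑V) ≤ 2 := by
  obtain ⟨A, hA, v, hT⟩ := exists_intAffineMap_cubeVertices_eq_ite hw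
  refine ⟨A, hA, v, lone3_le_of_nonneg ((coe_nonempty.2 hVne).image _) ?_ ?_⟩
  · rintro _ ⟨u, hu, rfl⟩ i
    rw [hT u (hV hu) i]
    split_ifs <;> norm_num
  · rintro _ ⟨u, hu, rfl⟩
    obtain ⟨i, hi⟩ : ∃ i, u i ≠ w i := Function.ne_iff.1 (ne_of_mem_of_not_mem hu hwV)
    have hle (j : Fin 3) : (if u j = w j then (1 : ℝ) else 0) ≤ 1 := by split_ifs <;> norm_num
    rw [hT u (hV hu) 0, hT u (hV hu) 1, hT u (hV hu) 2]
    have hzero : (if u i = w i then (1 : ℝ) else 0) = 0 := if_neg hi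
    fin_cases i <;> simp only [Fin.zero_eta, Fin.mk_one, Fin.reduceFinMk] at hzero <;>
      linarith [hle 0, hle 1, hle 2]

lemma one_le_max_sum_sub_sum_min {ι : Type*} [Fintype ι] {a : ι → ℤ} (ha : a ≠ 0) :
    1 ≤ max (∑ i, a i) 0 - ∑ i, min (a i) 0 := by
  obtain ⟨k, hk⟩ : ∃ k, a k ≠ 0 := Function.ne_iff.1 ha
  have hpos : a k - min (a k) 0 ≤ ∑ i, (a i - min (a i) 0) :=
    single_le_sum (f := fun i => a i - min (a i) 0) (fun i _ => by omega) (mem_univ k)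
  have hneg : -min (a k) 0 ≤ ∑ i, -min (a i) 0 :=
    single_le_sum (f := fun i => -min (a i) 0) (fun i _ => by omega) (mem_univ k)
  rw [sum_sub_distrib] at hpos
  rw [sum_neg_distrib] at hneg
  omega

lemma three_le_lone3_image_cubeVertices {A : Matrix (Fin 3) (Fin 3) ℤ} (hA : IsUnit A.det)
    (v : Fin 3 → ℤ) : 3 ≤ lone3 (intAffineMap A v '' ↑(cubeVertices 3)) := by
  -- Column by column, `p` maximises the coordinate sum of the image, `q i` minimises coordinate `i`.
  let p : Fin 3 → ℝ := fun j => if 0 ≤ ∑ i, A i j then 1 else 0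
  let q : Fin 3 → Fin 3 → ℝ := fun i j => if A i j < 0 then 1 else 0
  have hp : p ∈ cubeVertices 3 :=
    mem_cubeVertices.2 fun j => by simp only [p]; split_ifs <;> simp
  have hq (i : Fin 3) : q i ∈ cubeVertices 3 :=
    mem_cubeVertices.2 fun j => by simp only [q]; split_ifs <;> simp
  have hcol (j : Fin 3) : (1 : ℝ) ≤ ((max (∑ i, A i j) 0 - ∑ i, min (A i j) 0 : ℤ) : ℝ) :=
    mod_cast one_le_max_sum_sub_sum_min fun h =>
      hA.ne_zero (det_eq_zero_of_column_eq_zero j (congrFun h))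
  have hmax (j : Fin 3) : (∑ i, (A i j : ℝ)) * p j = ((max (∑ i, A i j) 0 : ℤ) : ℝ) := by
    simp only [p]
    split_ifs with h
    · rw [max_eq_left h]; push_cast; ring
    · rw [max_eq_right (by omega)]; simp
  have hmin (i j : Fin 3) : (A i j : ℝ) * q i j = ((min (A i j) 0 : ℤ) : ℝ) := by
    simp only [q]
    split_ifs with h
    · rw [min_eq_left h.le]; ring
    · rw [min_eq_right (by omega)]; simp
  have hlone := le_lone3 ((cubeVertices 3).finite_toSet.image (intAffineMap A v))
    (Set.mem_image_of_mem _ hp) (q := fun i => intAffineMap A v (q i))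
    fun i => Set.mem_image_of_mem _ (hq i)
  simp only [intAffineMap_apply, Fin.sum_univ_three, Int.cast_sub, Int.cast_add] at hlone hmax hcol
  linarith [hmax 0, hmax 1, hmax 2, hmin 0 0, hmin 0 1, hmin 0 2, hmin 1 0, hmin 1 1, hmin 1 2,
    hmin 2 0, hmin 2 1, hmin 2 2, hcol 0, hcol 1, hcol 2]

theorem lsDelta3_le_three_of_subset_cube (P : Set (Fin 3 → ℝ)) (hP : IsLatticePolytope P)
    (hcube : P ⊆ {x | ∀ i, 0 ≤ x i ∧ x i ≤ 1}) :
    lsDelta3 P ≤ 3 ∧ (lsDelta3 P = 3 ↔ P = {x | ∀ i, 0 ≤ x i ∧ x i ≤ 1}) := by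
  obtain ⟨V, hVne, hVint, rfl⟩ := hP
  have hVcube (u) (hu : u ∈ V) : ∀ i, 0 ≤ u i ∧ u i ≤ 1 :=
    hcube (subset_convexHull ℝ _ hu)
  have hle : lsDelta3 (convexHull ℝ ↑V) ≤ 3 := by
    refine (lsDelta3_convexHull_le V.finite_toSet (A := 1) (by simp) 0).trans ?_
    rw [intAffineMap_one_zero, AffineMap.coe_id, Set.image_id]
    refine lone3_le_of_nonneg (coe_nonempty.2 hVne) (fun u hu i => (hVcube u hu i).1)
      fun u hu => ?_
    linarith [(hVcube u hu 0).2, (hVcube u hu 1).2, (hVcube u hu 2).2]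
  refine ⟨hle, fun h3 => ?_, fun hP => ?_⟩
  · by_contra hne
    have hV : V ⊆ cubeVertices 3 := fun u hu => mem_cubeVertices_of_int (hVint u hu) (hVcube u hu)
    obtain ⟨w, hw, hwV⟩ : ∃ w ∈ cubeVertices 3, w ∉ V := by
      by_contra! hall
      exact hne (hcube.antisymm (convexHull_cubeVertices 3 ▸ convexHull_mono (coe_subset.2 hall)))
    obtain ⟨A, hA, v, h2⟩ := exists_lone3_image_le_two hVne hV hw hwV
    linarith [lsDelta3_convexHull_le V.finite_toSet hA v]
  · refine hle.antisymm ?_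
    rw [hP, ← convexHull_cubeVertices]
    exact le_lsDelta3_convexHull (cubeVertices 3).finite_toSet fun A hA v =>
      three_le_lone3_image_cubeVertices hA v
end

section
/- Let P in R^2 be a plane lattice polygon. Then the naive lattice size nls_Delta(P) equals the minimum of the four quantities l_1(P), l_2(P), l_3(P), l_4(P), and each l_i(P) >= ls_Delta(P). -/
open scoped BigOperators

noncomputable def lOne (P : Set (Fin 2 → ℝ)) : ℝ :=
  sSup ((fun x => x 0 + x 1) '' P) - sInf ((fun x => x 0) '' P) - sInf ((fun x => x 1) '' P)

noncomputable def lTwo (P : Set (Fin 2 → ℝ)) : ℝ :=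
  sSup ((fun x => x 0) '' P) + sSup ((fun x => x 1) '' P) - sInf ((fun x => x 0 + x 1) '' P)

noncomputable def lThree (P : Set (Fin 2 → ℝ)) : ℝ :=
  sSup ((fun x => x 1) '' P) - sInf ((fun x => x 0) '' P) + sSup ((fun x => x 0 - x 1) '' P)

noncomputable def lFour (P : Set (Fin 2 → ℝ)) : ℝ :=
  sSup ((fun x => x 0) '' P) - sInf ((fun x => x 1) '' P) + sSup ((fun x => x 1 - x 0) '' P)

/-- Naive lattice size: smallest `l` such that a signed-diagonal image plus a lattice
translation of `P` fits in `l` times the standard simplex. -/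
noncomputable def nlsDelta2 (P : Set (Fin 2 → ℝ)) : ℝ :=
  sInf {l : ℝ | ∃ ε : Fin 2 → ℤ, (∀ i, ε i = 1 ∨ ε i = -1) ∧ ∃ v : Fin 2 → ℤ,
    (fun x => fun i => (ε i : ℝ) * x i + (v i : ℝ)) '' P ⊆
      {y : Fin 2 → ℝ | 0 ≤ y 0 ∧ 0 ≤ y 1 ∧ y 0 + y 1 ≤ l}}

/- ### Auxiliary lemmas -/

lemma hull_isGreatest {V : Finset (Fin 2 → ℝ)} (hV : V.Nonempty) {f : (Fin 2 → ℝ) → ℝ}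
    (hf : IsLinearMap ℝ f) :
    ∃ w ∈ V, IsGreatest (f '' (convexHull ℝ (V : Set (Fin 2 → ℝ)))) (f w) := by
  obtain ⟨w, hw, hsup⟩ := Finset.exists_mem_eq_sup' hV f
  refine ⟨w, hw, ⟨w, subset_convexHull ℝ _ hw, rfl⟩, ?_⟩
  rintro y ⟨x, hx, rfl⟩
  have hsub : (convexHull ℝ (V : Set (Fin 2 → ℝ))) ⊆ {z | f z ≤ f w} := by
    apply convexHull_min ?_ (convex_halfSpace_le hf _)
    intro z hz
    calc f z ≤ V.sup' hV f := Finset.le_sup' f hz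
      _ = f w := hsup
  exact hsub hx

lemma hull_isLeast {V : Finset (Fin 2 → ℝ)} (hV : V.Nonempty) {f : (Fin 2 → ℝ) → ℝ}
    (hf : IsLinearMap ℝ f) :
    ∃ w ∈ V, IsLeast (f '' (convexHull ℝ (V : Set (Fin 2 → ℝ)))) (f w) := by
  obtain ⟨w, hw, hinf⟩ := Finset.exists_mem_eq_inf' hV f
  refine ⟨w, hw, ⟨w, subset_convexHull ℝ _ hw, rfl⟩, ?_⟩
  rintro y ⟨x, hx, rfl⟩
  have hsub : (convexHull ℝ (V : Set (Fin 2 → ℝ))) ⊆ {z | f w ≤ f z} := by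
    apply convexHull_min ?_ (convex_halfSpace_ge hf _)
    intro z hz
    calc f w = V.inf' hV f := hinf.symm
      _ ≤ f z := Finset.inf'_le f hz
  exact hsub hx

lemma isGreatest_comp {α : Type*} {P : Set α} {f h : α → ℝ} {a b : ℝ}
    (hg : IsGreatest (f '' P) a) (hfg : ∀ x, h x = f x) (hab : b = a) :
    IsGreatest (h '' P) b := by
  subst hab
  have : h = f := funext hfg
  rw [this]; exact hg

lemma isLeast_comp {α : Type*} {P : Set α} {f h : α → ℝ} {a b : ℝ}
    (hg : IsLeast (f '' P) a) (hfg : ∀ x, h x = f x) (hab : b = a) :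
    IsLeast (h '' P) b := by
  subst hab
  have : h = f := funext hfg
  rw [this]; exact hg

lemma isGreatest_neg {α : Type*} {P : Set α} {f h : α → ℝ} {a b : ℝ}
    (hg : IsLeast (f '' P) a) (hfg : ∀ x, h x = -(f x)) (hab : b = -a) :
    IsGreatest (h '' P) b := by
  subst hab
  obtain ⟨⟨p, hp, hpe⟩, hlb⟩ := hg
  refine ⟨⟨p, hp, by rw [hfg, hpe]⟩, ?_⟩
  rintro y ⟨q, hq, rfl⟩
  have := hlb ⟨q, hq, rfl⟩
  rw [hfg]
  linarith

lemma isLeast_neg {α : Type*} {P : Set α} {f h : α → ℝ} {a b : ℝ}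
    (hg : IsGreatest (f '' P) a) (hfg : ∀ x, h x = -(f x)) (hab : b = -a) :
    IsLeast (h '' P) b := by
  subst hab
  obtain ⟨⟨p, hp, hpe⟩, hub⟩ := hg
  refine ⟨⟨p, hp, by rw [hfg, hpe]⟩, ?_⟩
  rintro y ⟨q, hq, rfl⟩
  have := hub ⟨q, hq, rfl⟩
  rw [hfg]
  linarith

theorem nls_eq_min_and_ge_ls (P : Set (Fin 2 → ℝ)) (hP : IsLatticePolytope P) :
    nlsDelta2 P = min (min (lOne P) (lTwo P)) (min (lThree P) (lFour P)) ∧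
      lsDelta2 P ≤ lOne P ∧ lsDelta2 P ≤ lTwo P ∧
      lsDelta2 P ≤ lThree P ∧ lsDelta2 P ≤ lFour P := by
  obtain ⟨V, hV, hint, rfl⟩ := hP
  set P := convexHull ℝ (V : Set (Fin 2 → ℝ)) with hPdef
  -- linearity of the functionals
  have lin0 : IsLinearMap ℝ (fun x : Fin 2 → ℝ => x 0) := ⟨fun x y => rfl, fun c x => rfl⟩
  have lin1 : IsLinearMap ℝ (fun x : Fin 2 → ℝ => x 1) := ⟨fun x y => rfl, fun c x => rfl⟩
  have lin01 : IsLinearMap ℝ (fun x : Fin 2 → ℝ => x 0 + x 1) :=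
    ⟨fun x y => by simp only [Pi.add_apply]; ring,
     fun c x => by simp only [Pi.smul_apply, smul_eq_mul]; ring⟩
  have linD : IsLinearMap ℝ (fun x : Fin 2 → ℝ => x 0 - x 1) :=
    ⟨fun x y => by simp only [Pi.add_apply]; ring,
     fun c x => by simp only [Pi.smul_apply, smul_eq_mul]; ring⟩
  have linE : IsLinearMap ℝ (fun x : Fin 2 → ℝ => x 1 - x 0) :=
    ⟨fun x y => by simp only [Pi.add_apply]; ring,
     fun c x => by simp only [Pi.smul_apply, smul_eq_mul]; ring⟩
  -- extremes
  obtain ⟨wS, hwSV, hgS'⟩ := hull_isGreatest hV lin01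
  obtain ⟨wT, hwTV, hlT'⟩ := hull_isLeast hV lin01
  obtain ⟨wa0, hwa0V, hl0'⟩ := hull_isLeast hV lin0
  obtain ⟨wA0, hwA0V, hg0'⟩ := hull_isGreatest hV lin0
  obtain ⟨wa1, hwa1V, hl1'⟩ := hull_isLeast hV lin1
  obtain ⟨wA1, hwA1V, hg1'⟩ := hull_isGreatest hV lin1
  obtain ⟨wD, hwDV, hgD'⟩ := hull_isGreatest hV linD
  obtain ⟨wE, hwEV, hgE'⟩ := hull_isGreatest hV linE
  have hgS : IsGreatest ((fun x : Fin 2 → ℝ => x 0 + x 1) '' P) (wS 0 + wS 1) := hgS'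
  have hlT : IsLeast ((fun x : Fin 2 → ℝ => x 0 + x 1) '' P) (wT 0 + wT 1) := hlT'
  have hl0 : IsLeast ((fun x : Fin 2 → ℝ => x 0) '' P) (wa0 0) := hl0'
  have hg0 : IsGreatest ((fun x : Fin 2 → ℝ => x 0) '' P) (wA0 0) := hg0'
  have hl1 : IsLeast ((fun x : Fin 2 → ℝ => x 1) '' P) (wa1 1) := hl1'
  have hg1 : IsGreatest ((fun x : Fin 2 → ℝ => x 1) '' P) (wA1 1) := hg1'
  have hgD : IsGreatest ((fun x : Fin 2 → ℝ => x 0 - x 1) '' P) (wD 0 - wD 1) := hgD'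
  have hgE : IsGreatest ((fun x : Fin 2 → ℝ => x 1 - x 0) '' P) (wE 1 - wE 0) := hgE'
  -- integer witnesses
  obtain ⟨na0, hna0⟩ := hint wa0 hwa0V 0
  obtain ⟨na1, hna1⟩ := hint wa1 hwa1V 1
  obtain ⟨nA0, hnA0⟩ := hint wA0 hwA0V 0
  obtain ⟨nA1, hnA1⟩ := hint wA1 hwA1V 1
  -- sSup/sInf values
  have hS : sSup ((fun x : Fin 2 → ℝ => x 0 + x 1) '' P) = wS 0 + wS 1 := hgS.csSup_eq
  have hT : sInf ((fun x : Fin 2 → ℝ => x 0 + x 1) '' P) = wT 0 + wT 1 := hlT.csInf_eq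
  have ha0 : sInf ((fun x : Fin 2 → ℝ => x 0) '' P) = wa0 0 := hl0.csInf_eq
  have hA0 : sSup ((fun x : Fin 2 → ℝ => x 0) '' P) = wA0 0 := hg0.csSup_eq
  have ha1 : sInf ((fun x : Fin 2 → ℝ => x 1) '' P) = wa1 1 := hl1.csInf_eq
  have hA1 : sSup ((fun x : Fin 2 → ℝ => x 1) '' P) = wA1 1 := hg1.csSup_eq
  have hD : sSup ((fun x : Fin 2 → ℝ => x 0 - x 1) '' P) = wD 0 - wD 1 := hgD.csSup_eq
  have hE : sSup ((fun x : Fin 2 → ℝ => x 1 - x 0) '' P) = wE 1 - wE 0 := hgE.csSup_eq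
  -- the l values
  have hL1 : lOne P = (wS 0 + wS 1) - wa0 0 - wa1 1 := by unfold lOne; rw [hS, ha0, ha1]
  have hL2 : lTwo P = wA0 0 + wA1 1 - (wT 0 + wT 1) := by unfold lTwo; rw [hA0, hA1, hT]
  have hL3 : lThree P = wA1 1 - wa0 0 + (wD 0 - wD 1) := by unfold lThree; rw [hA1, ha0, hD]
  have hL4 : lFour P = wA0 0 - wa1 1 + (wE 1 - wE 0) := by unfold lFour; rw [hA0, ha1, hE]
  -- ### part 1: nls = min
  have memN1 : ∃ ε : Fin 2 → ℤ, (∀ i, ε i = 1 ∨ ε i = -1) ∧ ∃ v : Fin 2 → ℤ,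
      (fun x => fun i => (ε i : ℝ) * x i + (v i : ℝ)) '' P ⊆
        {y : Fin 2 → ℝ | 0 ≤ y 0 ∧ 0 ≤ y 1 ∧ y 0 + y 1 ≤ lOne P} := by
    refine ⟨![1, 1], by intro i; fin_cases i <;> simp, ![-na0, -na1], ?_⟩
    rintro y ⟨x, hx, rfl⟩
    have h0 : wa0 0 ≤ x 0 := hl0.2 ⟨x, hx, rfl⟩
    have h1 : wa1 1 ≤ x 1 := hl1.2 ⟨x, hx, rfl⟩
    have hs : x 0 + x 1 ≤ wS 0 + wS 1 := hgS.2 ⟨x, hx, rfl⟩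
    simp only [Set.mem_setOf_eq, Matrix.cons_val_zero, Matrix.cons_val_one, Matrix.head_cons,
      Int.cast_one, Int.cast_neg, hL1]
    refine ⟨by linarith, by linarith, by linarith⟩
  have memN2 : ∃ ε : Fin 2 → ℤ, (∀ i, ε i = 1 ∨ ε i = -1) ∧ ∃ v : Fin 2 → ℤ,
      (fun x => fun i => (ε i : ℝ) * x i + (v i : ℝ)) '' P ⊆
        {y : Fin 2 → ℝ | 0 ≤ y 0 ∧ 0 ≤ y 1 ∧ y 0 + y 1 ≤ lTwo P} := by
    refine ⟨![-1, -1], by intro i; fin_cases i <;> simp, ![nA0, nA1], ?_⟩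
    rintro y ⟨x, hx, rfl⟩
    have h0 : x 0 ≤ wA0 0 := hg0.2 ⟨x, hx, rfl⟩
    have h1 : x 1 ≤ wA1 1 := hg1.2 ⟨x, hx, rfl⟩
    have hs : wT 0 + wT 1 ≤ x 0 + x 1 := hlT.2 ⟨x, hx, rfl⟩
    simp only [Set.mem_setOf_eq, Matrix.cons_val_zero, Matrix.cons_val_one, Matrix.head_cons,
      Int.cast_one, Int.cast_neg, hL2]
    refine ⟨by linarith, by linarith, by linarith⟩
  have memN3 : ∃ ε : Fin 2 → ℤ, (∀ i, ε i = 1 ∨ ε i = -1) ∧ ∃ v : Fin 2 → ℤ,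
      (fun x => fun i => (ε i : ℝ) * x i + (v i : ℝ)) '' P ⊆
        {y : Fin 2 → ℝ | 0 ≤ y 0 ∧ 0 ≤ y 1 ∧ y 0 + y 1 ≤ lThree P} := by
    refine ⟨![1, -1], by intro i; fin_cases i <;> simp, ![-na0, nA1], ?_⟩
    rintro y ⟨x, hx, rfl⟩
    have h0 : wa0 0 ≤ x 0 := hl0.2 ⟨x, hx, rfl⟩
    have h1 : x 1 ≤ wA1 1 := hg1.2 ⟨x, hx, rfl⟩
    have hs : x 0 - x 1 ≤ wD 0 - wD 1 := hgD.2 ⟨x, hx, rfl⟩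
    simp only [Set.mem_setOf_eq, Matrix.cons_val_zero, Matrix.cons_val_one, Matrix.head_cons,
      Int.cast_one, Int.cast_neg, hL3]
    refine ⟨by linarith, by linarith, by linarith⟩
  have memN4 : ∃ ε : Fin 2 → ℤ, (∀ i, ε i = 1 ∨ ε i = -1) ∧ ∃ v : Fin 2 → ℤ,
      (fun x => fun i => (ε i : ℝ) * x i + (v i : ℝ)) '' P ⊆
        {y : Fin 2 → ℝ | 0 ≤ y 0 ∧ 0 ≤ y 1 ∧ y 0 + y 1 ≤ lFour P} := by
    refine ⟨![-1, 1], by intro i; fin_cases i <;> simp, ![nA0, -na1], ?_⟩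
    rintro y ⟨x, hx, rfl⟩
    have h0 : x 0 ≤ wA0 0 := hg0.2 ⟨x, hx, rfl⟩
    have h1 : wa1 1 ≤ x 1 := hl1.2 ⟨x, hx, rfl⟩
    have hs : x 1 - x 0 ≤ wE 1 - wE 0 := hgE.2 ⟨x, hx, rfl⟩
    simp only [Set.mem_setOf_eq, Matrix.cons_val_zero, Matrix.cons_val_one, Matrix.head_cons,
      Int.cast_one, Int.cast_neg, hL4]
    refine ⟨by linarith, by linarith, by linarith⟩
  have hlbN : ∀ l : ℝ, (∃ ε : Fin 2 → ℤ, (∀ i, ε i = 1 ∨ ε i = -1) ∧ ∃ v : Fin 2 → ℤ,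
      (fun x => fun i => (ε i : ℝ) * x i + (v i : ℝ)) '' P ⊆
        {y : Fin 2 → ℝ | 0 ≤ y 0 ∧ 0 ≤ y 1 ∧ y 0 + y 1 ≤ l}) →
      min (min (lOne P) (lTwo P)) (min (lThree P) (lFour P)) ≤ l := by
    rintro l ⟨ε, hε, v, hsub⟩
    obtain ⟨pS, hpS, hpSe'⟩ := hgS.1
    obtain ⟨pT, hpT, hpTe'⟩ := hlT.1
    obtain ⟨pa0, hpa0, hpa0e'⟩ := hl0.1
    obtain ⟨pA0, hpA0, hpA0e'⟩ := hg0.1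
    obtain ⟨pa1, hpa1, hpa1e'⟩ := hl1.1
    obtain ⟨pA1, hpA1, hpA1e'⟩ := hg1.1
    obtain ⟨pD, hpD, hpDe'⟩ := hgD.1
    obtain ⟨pE, hpE, hpEe'⟩ := hgE.1
    have hpSe : pS 0 + pS 1 = wS 0 + wS 1 := hpSe'
    have hpTe : pT 0 + pT 1 = wT 0 + wT 1 := hpTe'
    have hpa0e : pa0 0 = wa0 0 := hpa0e'
    have hpA0e : pA0 0 = wA0 0 := hpA0e'
    have hpa1e : pa1 1 = wa1 1 := hpa1e'
    have hpA1e : pA1 1 = wA1 1 := hpA1e'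
    have hpDe : pD 0 - pD 1 = wD 0 - wD 1 := hpDe'
    have hpEe : pE 1 - pE 0 = wE 1 - wE 0 := hpEe'
    rcases hε 0 with he0 | he0 <;> rcases hε 1 with he1 | he1
    · -- ε = (1, 1) : bound by lOne
      have h1 := hsub ⟨pS, hpS, rfl⟩
      have h2 := hsub ⟨pa0, hpa0, rfl⟩
      have h3 := hsub ⟨pa1, hpa1, rfl⟩
      simp only [Set.mem_setOf_eq, he0, he1, Int.cast_one, Int.cast_neg] at h1 h2 h3
      refine le_trans (min_le_left _ _) (le_trans (min_le_left _ _) ?_)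
      rw [hL1]
      linarith [h1.2.2, h2.1, h3.2.1]
    · -- ε = (1, -1) : bound by lThree
      have h1 := hsub ⟨pD, hpD, rfl⟩
      have h2 := hsub ⟨pa0, hpa0, rfl⟩
      have h3 := hsub ⟨pA1, hpA1, rfl⟩
      simp only [Set.mem_setOf_eq, he0, he1, Int.cast_one, Int.cast_neg] at h1 h2 h3
      refine le_trans (min_le_right _ _) (le_trans (min_le_left _ _) ?_)
      rw [hL3]
      linarith [h1.2.2, h2.1, h3.2.1]
    · -- ε = (-1, 1) : bound by lFour
      have h1 := hsub ⟨pE, hpE, rfl⟩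
      have h2 := hsub ⟨pA0, hpA0, rfl⟩
      have h3 := hsub ⟨pa1, hpa1, rfl⟩
      simp only [Set.mem_setOf_eq, he0, he1, Int.cast_one, Int.cast_neg] at h1 h2 h3
      refine le_trans (min_le_right _ _) (le_trans (min_le_right _ _) ?_)
      rw [hL4]
      linarith [h1.2.2, h2.1, h3.2.1]
    · -- ε = (-1, -1) : bound by lTwo
      have h1 := hsub ⟨pT, hpT, rfl⟩
      have h2 := hsub ⟨pA0, hpA0, rfl⟩
      have h3 := hsub ⟨pA1, hpA1, rfl⟩
      simp only [Set.mem_setOf_eq, he0, he1, Int.cast_one, Int.cast_neg] at h1 h2 h3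
      refine le_trans (min_le_left _ _) (le_trans (min_le_right _ _) ?_)
      rw [hL2]
      linarith [h1.2.2, h2.1, h3.2.1]
  have hNbdd : BddBelow {l : ℝ | ∃ ε : Fin 2 → ℤ, (∀ i, ε i = 1 ∨ ε i = -1) ∧ ∃ v : Fin 2 → ℤ,
      (fun x => fun i => (ε i : ℝ) * x i + (v i : ℝ)) '' P ⊆
        {y : Fin 2 → ℝ | 0 ≤ y 0 ∧ 0 ≤ y 1 ∧ y 0 + y 1 ≤ l}} :=
    ⟨_, fun l hl => hlbN l hl⟩
  have part1 : nlsDelta2 P = min (min (lOne P) (lTwo P)) (min (lThree P) (lFour P)) := by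
    unfold nlsDelta2
    apply le_antisymm
    · exact le_min (le_min (csInf_le hNbdd memN1) (csInf_le hNbdd memN2))
        (le_min (csInf_le hNbdd memN3) (csInf_le hNbdd memN4))
    · exact le_csInf ⟨lOne P, memN1⟩ fun l hl => hlbN l hl
  -- ### part 2: ls ≤ each lᵢ
  have hPc : IsCompact P := V.finite_toSet.isCompact_convexHull ℝ
  have hLlb : ∀ r : ℝ, (∃ A : Matrix (Fin 2) (Fin 2) ℤ, IsUnit A.det ∧ ∃ v : Fin 2 → ℤ,
      r = lone2 ((fun x => Matrix.mulVec (A.map (Int.cast : ℤ → ℝ)) x + zcast v) '' P)) →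
      (0 : ℝ) ≤ r := by
    rintro r ⟨A, -, v, rfl⟩
    have hcont : Continuous (fun x : Fin 2 → ℝ =>
        Matrix.mulVec (A.map (Int.cast : ℤ → ℝ)) x + zcast v) := by
      have h1 := LinearMap.continuous_of_finiteDimensional
        (Matrix.mulVecLin (A.map (Int.cast : ℤ → ℝ)))
      have h2 : Continuous fun x : Fin 2 → ℝ => (A.map (Int.cast : ℤ → ℝ)).mulVec x := by
        exact h1
      exact h2.add continuous_const
    set g := fun x : Fin 2 → ℝ => Matrix.mulVec (A.map (Int.cast : ℤ → ℝ)) x + zcast v with hg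
    have hQc : IsCompact (g '' P) := hPc.image hcont
    have hp : wS ∈ P := subset_convexHull ℝ _ hwSV
    have h1 : g wS 0 + g wS 1 ≤ sSup ((fun y : Fin 2 → ℝ => y 0 + y 1) '' (g '' P)) :=
      le_csSup (hQc.image ((continuous_apply 0).add (continuous_apply 1))).bddAbove
        ⟨g wS, ⟨wS, hp, rfl⟩, rfl⟩
    have h2 : sInf ((fun y : Fin 2 → ℝ => y 0) '' (g '' P)) ≤ g wS 0 :=
      csInf_le (hQc.image (continuous_apply 0)).bddBelow ⟨g wS, ⟨wS, hp, rfl⟩, rfl⟩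
    have h3 : sInf ((fun y : Fin 2 → ℝ => y 1) '' (g '' P)) ≤ g wS 1 :=
      csInf_le (hQc.image (continuous_apply 1)).bddBelow ⟨g wS, ⟨wS, hp, rfl⟩, rfl⟩
    unfold lone2
    linarith
  have hLbdd : BddBelow {r : ℝ | ∃ A : Matrix (Fin 2) (Fin 2) ℤ, IsUnit A.det ∧ ∃ v : Fin 2 → ℤ,
      r = lone2 ((fun x => Matrix.mulVec (A.map (Int.cast : ℤ → ℝ)) x + zcast v) '' P)} :=
    ⟨0, fun r hr => hLlb r hr⟩
  have memL1 : ∃ A : Matrix (Fin 2) (Fin 2) ℤ, IsUnit A.det ∧ ∃ v : Fin 2 → ℤ,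
      lOne P = lone2 ((fun x => Matrix.mulVec (A.map (Int.cast : ℤ → ℝ)) x + zcast v) '' P) := by
    refine ⟨1, by simp, 0, ?_⟩
    have hmap : (fun x : Fin 2 → ℝ =>
        Matrix.mulVec (((1 : Matrix (Fin 2) (Fin 2) ℤ)).map (Int.cast : ℤ → ℝ)) x + zcast 0) =
        fun x => x := by
      funext x i
      fin_cases i <;>
        simp [Matrix.mulVec, dotProduct, Fin.sum_univ_two, zcast, Matrix.one_apply,
          Matrix.map_apply]
    rw [hmap, Set.image_id']
    rfl
  have memL2 : ∃ A : Matrix (Fin 2) (Fin 2) ℤ, IsUnit A.det ∧ ∃ v : Fin 2 → ℤ,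
      lTwo P = lone2 ((fun x => Matrix.mulVec (A.map (Int.cast : ℤ → ℝ)) x + zcast v) '' P) := by
    refine ⟨!![-1, 0; 0, -1], by simp [Matrix.det_fin_two_of], 0, ?_⟩
    have hmap : (fun x : Fin 2 → ℝ =>
        Matrix.mulVec ((!![-1, 0; 0, -1] : Matrix (Fin 2) (Fin 2) ℤ).map (Int.cast : ℤ → ℝ)) x +
          zcast 0) = fun x => ![-(x 0), -(x 1)] := by
      funext x i
      fin_cases i <;>
        simp [Matrix.mulVec, dotProduct, Fin.sum_univ_two, zcast, Matrix.map_apply]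
    rw [hmap]
    unfold lone2
    rw [Set.image_image, Set.image_image, Set.image_image]
    simp only [Matrix.cons_val_zero, Matrix.cons_val_one, Matrix.head_cons]
    rw [(isGreatest_neg hlT (fun x => by ring) rfl :
          IsGreatest ((fun x : Fin 2 → ℝ => -(x 0) + -(x 1)) '' P) (-(wT 0 + wT 1))).csSup_eq,
        (isLeast_neg hg0 (fun x => rfl) rfl :
          IsLeast ((fun x : Fin 2 → ℝ => -(x 0)) '' P) (-(wA0 0))).csInf_eq,
        (isLeast_neg hg1 (fun x => rfl) rfl :
          IsLeast ((fun x : Fin 2 → ℝ => -(x 1)) '' P) (-(wA1 1))).csInf_eq, hL2]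
    ring
  have memL3 : ∃ A : Matrix (Fin 2) (Fin 2) ℤ, IsUnit A.det ∧ ∃ v : Fin 2 → ℤ,
      lThree P = lone2 ((fun x => Matrix.mulVec (A.map (Int.cast : ℤ → ℝ)) x + zcast v) '' P) := by
    refine ⟨!![1, 0; 0, -1], by simp [Matrix.det_fin_two_of], 0, ?_⟩
    have hmap : (fun x : Fin 2 → ℝ =>
        Matrix.mulVec ((!![1, 0; 0, -1] : Matrix (Fin 2) (Fin 2) ℤ).map (Int.cast : ℤ → ℝ)) x +
          zcast 0) = fun x => ![x 0, -(x 1)] := by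
      funext x i
      fin_cases i <;>
        simp [Matrix.mulVec, dotProduct, Fin.sum_univ_two, zcast, Matrix.map_apply]
    rw [hmap]
    unfold lone2
    rw [Set.image_image, Set.image_image, Set.image_image]
    simp only [Matrix.cons_val_zero, Matrix.cons_val_one, Matrix.head_cons]
    rw [(isGreatest_comp hgD (fun x => by ring) (by ring) :
          IsGreatest ((fun x : Fin 2 → ℝ => x 0 + -(x 1)) '' P) (wD 0 - wD 1)).csSup_eq,
        ha0,
        (isLeast_neg hg1 (fun x => rfl) rfl :
          IsLeast ((fun x : Fin 2 → ℝ => -(x 1)) '' P) (-(wA1 1))).csInf_eq, hL3]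
    ring
  have memL4 : ∃ A : Matrix (Fin 2) (Fin 2) ℤ, IsUnit A.det ∧ ∃ v : Fin 2 → ℤ,
      lFour P = lone2 ((fun x => Matrix.mulVec (A.map (Int.cast : ℤ → ℝ)) x + zcast v) '' P) := by
    refine ⟨!![-1, 0; 0, 1], by simp [Matrix.det_fin_two_of], 0, ?_⟩
    have hmap : (fun x : Fin 2 → ℝ =>
        Matrix.mulVec ((!![-1, 0; 0, 1] : Matrix (Fin 2) (Fin 2) ℤ).map (Int.cast : ℤ → ℝ)) x +
          zcast 0) = fun x => ![-(x 0), x 1] := by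
      funext x i
      fin_cases i <;>
        simp [Matrix.mulVec, dotProduct, Fin.sum_univ_two, zcast, Matrix.map_apply]
    rw [hmap]
    unfold lone2
    rw [Set.image_image, Set.image_image, Set.image_image]
    simp only [Matrix.cons_val_zero, Matrix.cons_val_one, Matrix.head_cons]
    rw [(isGreatest_comp hgE (fun x => by ring) (by ring) :
          IsGreatest ((fun x : Fin 2 → ℝ => -(x 0) + x 1) '' P) (wE 1 - wE 0)).csSup_eq,
        (isLeast_neg hg0 (fun x => rfl) rfl :
          IsLeast ((fun x : Fin 2 → ℝ => -(x 0)) '' P) (-(wA0 0))).csInf_eq,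
        ha1, hL4]
    ring
  refine ⟨part1, ?_, ?_, ?_, ?_⟩ <;> unfold lsDelta2
  · exact csInf_le hLbdd memL1
  · exact csInf_le hLbdd memL2
  · exact csInf_le hLbdd memL3
  · exact csInf_le hLbdd memL4
end
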